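/- arXiv:1604.04860 — 9 statements merged into one kernel-verified Lean document; each statement's English description precedes it below -/
import Mathlib

section
/- Consider the optimization problem of maximizing ∑_{i=1}^N g(p_i) over nonnegative p = (p_1,...,p_N) and δ = (δ_1,...,δ_N) subject to (b) ∑_{i=1}^j p_i ≤ ∑_{i=1}^j E_i for all j, (c) ∑_{i=1}^j φ(g(p_i)) ≤ ∑_{i=1}^j (Ē_i + α δ_i) for all j, and (d) ∑_{i=1}^j δ_i ≤ ∑_{i=1}^j H_i for all j, where δ_i ≥ 0. Then the optimal value of this problem equals the optimal value of the problem of maximizing ∑_{i=1}^N g(p_i) over p subject only to (b) and (c') ∑_{i=1}^j φ(g(p_i)) ≤ ∑_{i=1}^j (Ē_i + α H_i) for all j. (I.e., setting δ_i = H_i, immediate energy transfer from helper to receiver, is optimal.) -/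
open Finset

lemma sum_add_mul_le_sum_add_mul {ι : Type*} (s : Finset ι) (a b c : ι → ℝ) {α : ℝ}
    (hα : 0 ≤ α) (hbc : ∑ i ∈ s, b i ≤ ∑ i ∈ s, c i) :
    ∑ i ∈ s, (a i + α * b i) ≤ ∑ i ∈ s, (a i + α * c i) := by
  simp only [sum_add_distrib, ← mul_sum]
  gcongr

theorem stmt_1_general (N : ℕ)
    (E Ebar H : Fin N → ℝ)
    (hH : ∀ i, 0 ≤ H i)
    (α : ℝ) (hα0 : 0 ≤ α)
    (g : ℝ → ℝ)
    (φ : ℝ → ℝ) :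
    sSup {v : ℝ | ∃ p δ : Fin N → ℝ,
        (∀ i, 0 ≤ p i) ∧ (∀ i, 0 ≤ δ i) ∧
        (∀ j : Fin N, ∑ i ∈ Iic j, p i ≤ ∑ i ∈ Iic j, E i) ∧
        (∀ j : Fin N, ∑ i ∈ Iic j, φ (g (p i)) ≤
          ∑ i ∈ Iic j, (Ebar i + α * δ i)) ∧
        (∀ j : Fin N, ∑ i ∈ Iic j, δ i ≤ ∑ i ∈ Iic j, H i) ∧
        v = ∑ i, g (p i)} =
    sSup {v : ℝ | ∃ p : Fin N → ℝ,
        (∀ i, 0 ≤ p i) ∧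
        (∀ j : Fin N, ∑ i ∈ Iic j, p i ≤ ∑ i ∈ Iic j, E i) ∧
        (∀ j : Fin N, ∑ i ∈ Iic j, φ (g (p i)) ≤
          ∑ i ∈ Iic j, (Ebar i + α * H i)) ∧
        v = ∑ i, g (p i)} := by
  -- The sets of achievable values already coincide: any admissible transfer `δ` credits the
  -- receiver no more than `δ = H` does, and `δ = H` is itself admissible.
  congr 1
  ext v
  constructor
  · rintro ⟨p, δ, hp, -, hb, hc, hd, rfl⟩
    exact ⟨p, hp, hb,
      fun j => (hc j).trans (sum_add_mul_le_sum_add_mul _ _ _ _ hα0 (hd j)), rfl⟩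
  · rintro ⟨p, hp, hb, hc, rfl⟩
    exact ⟨p, H, hp, hH, hb, hc, fun _ => le_rfl, rfl⟩

/-- Lemma 1: immediate transfer of the helper's energy to the receiver is
optimal — the problem with an explicit transfer policy `δ` has the same optimal
value as the problem where the receiver is credited `Ē i + α * H i` each slot. -/
theorem stmt_1 (N : ℕ) (hN : 0 < N)
    (E Ebar H : Fin N → ℝ)
    (hE : ∀ i, 0 ≤ E i) (hEbar : ∀ i, 0 ≤ Ebar i) (hH : ∀ i, 0 ≤ H i)
    (α : ℝ) (hα0 : 0 ≤ α) (hα1 : α ≤ 1)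
    (g : ℝ → ℝ) (hg : ∀ p, g p = (1 / 2) * Real.log (1 + p))
    (φ : ℝ → ℝ)
    (hφconv : ConvexOn ℝ (Set.Ici 0) φ)
    (hφmono : MonotoneOn φ (Set.Ici 0)) :
    sSup {v : ℝ | ∃ p δ : Fin N → ℝ,
        (∀ i, 0 ≤ p i) ∧ (∀ i, 0 ≤ δ i) ∧
        (∀ j : Fin N, ∑ i ∈ Iic j, p i ≤ ∑ i ∈ Iic j, E i) ∧
        (∀ j : Fin N, ∑ i ∈ Iic j, φ (g (p i)) ≤
          ∑ i ∈ Iic j, (Ebar i + α * δ i)) ∧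
        (∀ j : Fin N, ∑ i ∈ Iic j, δ i ≤ ∑ i ∈ Iic j, H i) ∧
        v = ∑ i, g (p i)} =
    sSup {v : ℝ | ∃ p : Fin N → ℝ,
        (∀ i, 0 ≤ p i) ∧
        (∀ j : Fin N, ∑ i ∈ Iic j, p i ≤ ∑ i ∈ Iic j, E i) ∧
        (∀ j : Fin N, ∑ i ∈ Iic j, φ (g (p i)) ≤
          ∑ i ∈ Iic j, (Ebar i + α * H i)) ∧
        v = ∑ i, g (p i)} :=
  stmt_1_general N E Ebar H hH α hα0 g φ
end

section
/- For the problem of maximizing ∑_{i=1}^N r_i over nonnegative rates r subject to ∑_{i=1}^j g⁻¹(r_i) ≤ ∑_{i=1}^j E_i and ∑_{i=1}^j φ(r_i) ≤ ∑_{i=1}^j (Ē_i + α H_i) for all j ≤ N, where g⁻¹ is strictly convex increasing and φ is strictly convex increasing: any optimal solution r* satisfies r*_i ≤ r*_{i+1} for all i = 1,...,N-1. -/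
/-!
If an optimal rate vector had `r k > r k'` for some `k < k'`, replace both rates by their mean
`m` and then raise the later one to `m + δ`. Prefix constraints ending before `k` are untouched,
those ending in `[k, k')` only see `r k` decrease, and for those containing both indices strict
convexity gives `F m + F m < F (r k') + F (r k)`, leaving room for a small `δ > 0` by continuity
of `F` at the interior point `m`. The total rate grows by `δ`, contradicting optimality.
-/

open Finset Filter Topology

lemma StrictConvexOn.two_mul_apply_midpoint_lt {s : Set ℝ} {f : ℝ → ℝ}
    (hf : StrictConvexOn ℝ s f) {a b : ℝ} (ha : a ∈ s) (hb : b ∈ s) (hab : a ≠ b) :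
    2 * f ((a + b) / 2) < f a + f b := by
  have h := hf.2 ha hb hab (by norm_num : (0 : ℝ) < 1 / 2) (by norm_num : (0 : ℝ) < 1 / 2)
    (by norm_num)
  have hmid : (1 / 2 : ℝ) • a + (1 / 2 : ℝ) • b = (a + b) / 2 := by simp only [smul_eq_mul]; ring
  rw [hmid, smul_eq_mul, smul_eq_mul] at h
  linarith

lemma StrictConvexOn.eventually_midpoint_exchange {s : Set ℝ} {f : ℝ → ℝ}
    (hf : StrictConvexOn ℝ s f) {a b : ℝ} (ha : a ∈ s) (hb : b ∈ s) (hab : a ≠ b)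
    (hm : (a + b) / 2 ∈ interior s) :
    ∀ᶠ δ in 𝓝 0, f ((a + b) / 2) + f ((a + b) / 2 + δ) < f a + f b := by
  have hcont : ContinuousAt f ((a + b) / 2) :=
    hf.convexOn.continuousOn_interior.continuousAt (isOpen_interior.mem_nhds hm)
  have hlim : Tendsto (fun δ => f ((a + b) / 2) + f ((a + b) / 2 + δ)) (𝓝 0)
      (𝓝 (f ((a + b) / 2) + f ((a + b) / 2))) :=
    tendsto_const_nhds.add
      (hcont.tendsto.comp ((continuous_const_add _).tendsto' 0 _ (add_zero _)))
  exact hlim.eventually_lt_const (by linarith [hf.two_mul_apply_midpoint_lt ha hb hab])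

lemma sum_Iic_le_sum_Iic_of_pair {ι : Type*} [Preorder ι] [LocallyFiniteOrderBot ι]
    {u v : ι → ℝ} {k k' : ι} (hkk' : k < k') (hk : u k ≤ v k)
    (hpair : u k + u k' ≤ v k + v k') (hoff : ∀ i, i ≠ k → i ≠ k' → u i = v i) (j : ι) :
    ∑ i ∈ Iic j, u i ≤ ∑ i ∈ Iic j, v i := by
  classical
  have hdiff : v - u = Pi.single k (v k - u k) + Pi.single k' (v k' - u k') := by
    ext i
    by_cases hi : i = k
    · subst hi; simp [hkk'.ne]
    by_cases hi' : i = k'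
    · subst hi'; simp [hi]
    simp [hi, hi', hoff i hi hi']
  have hsum := congrArg (fun w => ∑ i ∈ Iic j, w i) hdiff
  simp only [Pi.sub_apply, Pi.add_apply, sum_sub_distrib, sum_add_distrib, sum_pi_single',
    mem_Iic] at hsum
  by_cases hk'j : k' ≤ j
  · rw [if_pos (hkk'.le.trans hk'j), if_pos hk'j] at hsum
    linarith
  · rw [if_neg hk'j] at hsum
    split_ifs at hsum <;> linarith

section PrefixFeasible

variable {ι κ : Type*} [LinearOrder ι] [LocallyFiniteOrderBot ι]

def PrefixFeasible (F : κ → ℝ → ℝ) (B : κ → ι → ℝ) (r : ι → ℝ) : Prop :=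
  (∀ i, 0 ≤ r i) ∧ ∀ c j, ∑ i ∈ Iic j, F c (r i) ≤ ∑ i ∈ Iic j, B c i

lemma PrefixFeasible.exists_sum_lt [Fintype ι] [Finite κ] {F : κ → ℝ → ℝ} {B : κ → ι → ℝ}
    (hconv : ∀ c, StrictConvexOn ℝ (Set.Ici 0) (F c))
    (hmono : ∀ c, MonotoneOn (F c) (Set.Ici 0)) {r : ι → ℝ} (hr : PrefixFeasible F B r)
    {k k' : ι} (hkk' : k < k') (hlt : r k' < r k) :
    ∃ r', PrefixFeasible F B r' ∧ ∑ i, r i < ∑ i, r' i := by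
  classical
  set m := (r k' + r k) / 2 with hm_def
  have ha : 0 ≤ r k' := hr.1 k'
  have hm : m ∈ interior (Set.Ici 0) := by
    rw [interior_Ici]; exact Set.mem_Ioi.2 (by linarith)
  obtain ⟨δ, hδ, hδpos⟩ : ∃ δ, (∀ c, F c m + F c (m + δ) < F c (r k') + F c (r k)) ∧ 0 < δ :=
    ((eventually_all.2 fun c => (hconv c).eventually_midpoint_exchange ha (hr.1 k) hlt.ne hm)
      |>.filter_mono nhdsWithin_le_nhds |>.and self_mem_nhdsWithin).exists (f := 𝓝[>] 0)
  set r' := r + Pi.single k (m - r k) + Pi.single k' (m + δ - r k')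
  have hr'k : r' k = m := by simp [r', hkk'.ne]
  have hr'k' : r' k' = m + δ := by simp [r', hkk'.ne']
  have hr'off : ∀ i, i ≠ k → i ≠ k' → r' i = r i := by
    intro i hi hi'
    simp [r', hi, hi']
  have hm_le : m ≤ r k := by linarith
  refine ⟨r', ⟨fun i => ?_, fun c j => ?_⟩, ?_⟩
  · by_cases hi : i = k
    · rw [hi, hr'k]; linarith
    by_cases hi' : i = k'
    · rw [hi', hr'k']; linarith
    rw [hr'off i hi hi']; exact hr.1 i
  · refine (sum_Iic_le_sum_Iic_of_pair hkk' ?_ ?_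
      (fun i hi hi' => by rw [hr'off i hi hi']) j).trans (hr.2 c j)
    · rw [hr'k]; exact hmono c (Set.mem_Ici.2 (by linarith)) (hr.1 k) hm_le
    · rw [hr'k, hr'k']; linarith [hδ c]
  · simp [r', sum_add_distrib]
    linarith

theorem PrefixFeasible.monotone [Fintype ι] [Finite κ] {F : κ → ℝ → ℝ} {B : κ → ι → ℝ}
    (hconv : ∀ c, StrictConvexOn ℝ (Set.Ici 0) (F c))
    (hmono : ∀ c, MonotoneOn (F c) (Set.Ici 0)) {r : ι → ℝ} (hr : PrefixFeasible F B r)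
    (hopt : ∀ r', PrefixFeasible F B r' → ∑ i, r' i ≤ ∑ i, r i) :
    Monotone r := by
  intro k k' hkk'
  by_contra! hlt
  obtain ⟨r', hr', hsum⟩ := hr.exists_sum_lt hconv hmono
    (hkk'.lt_of_ne (ne_of_apply_ne r hlt.ne')) hlt
  exact (hopt r' hr').not_gt hsum

end PrefixFeasible

theorem stmt_2_general (N : ℕ)
    (E Ebar H : Fin N → ℝ)
    (α : ℝ)
    (ginv φ : ℝ → ℝ)
    (hgconv : StrictConvexOn ℝ (Set.Ici 0) ginv)
    (hgmono : StrictMonoOn ginv (Set.Ici 0))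
    (hφconv : StrictConvexOn ℝ (Set.Ici 0) φ)
    (hφmono : StrictMonoOn φ (Set.Ici 0))
    (r : Fin N → ℝ)
    (hfeas : (∀ i, 0 ≤ r i) ∧
      (∀ j : Fin N, ∑ i ∈ Iic j, ginv (r i) ≤ ∑ i ∈ Iic j, E i) ∧
      (∀ j : Fin N, ∑ i ∈ Iic j, φ (r i) ≤ ∑ i ∈ Iic j, (Ebar i + α * H i)))
    (hopt : ∀ r' : Fin N → ℝ,
      ((∀ i, 0 ≤ r' i) ∧
        (∀ j : Fin N, ∑ i ∈ Iic j, ginv (r' i) ≤ ∑ i ∈ Iic j, E i) ∧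
        (∀ j : Fin N, ∑ i ∈ Iic j, φ (r' i) ≤
          ∑ i ∈ Iic j, (Ebar i + α * H i))) →
      ∑ i, r' i ≤ ∑ i, r i) :
    Monotone r :=
  PrefixFeasible.monotone (F := fun b => bif b then ginv else φ)
    (B := fun b i => bif b then E i else Ebar i + α * H i)
    (Bool.forall_bool.2 ⟨hφconv, hgconv⟩)
    (Bool.forall_bool.2 ⟨hφmono.monotoneOn, hgmono.monotoneOn⟩)
    ⟨hfeas.1, Bool.forall_bool.2 ⟨hfeas.2.2, hfeas.2.1⟩⟩
    fun r' hr' => hopt r' ⟨hr'.1, hr'.2 true, hr'.2 false⟩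

/-- Lemma 2: the optimal rates of problem (3) are nondecreasing in time. -/
theorem stmt_2 (N : ℕ) (hN : 0 < N)
    (E Ebar H : Fin N → ℝ)
    (hE : ∀ i, 0 ≤ E i) (hEbar : ∀ i, 0 ≤ Ebar i) (hH : ∀ i, 0 ≤ H i)
    (α : ℝ) (hα0 : 0 ≤ α) (hα1 : α ≤ 1)
    (ginv φ : ℝ → ℝ)
    (hgconv : StrictConvexOn ℝ (Set.Ici 0) ginv)
    (hgmono : StrictMonoOn ginv (Set.Ici 0))
    (hφconv : StrictConvexOn ℝ (Set.Ici 0) φ)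
    (hφmono : StrictMonoOn φ (Set.Ici 0))
    (r : Fin N → ℝ)
    (hfeas : (∀ i, 0 ≤ r i) ∧
      (∀ j : Fin N, ∑ i ∈ Iic j, ginv (r i) ≤ ∑ i ∈ Iic j, E i) ∧
      (∀ j : Fin N, ∑ i ∈ Iic j, φ (r i) ≤ ∑ i ∈ Iic j, (Ebar i + α * H i)))
    (hopt : ∀ r' : Fin N → ℝ,
      ((∀ i, 0 ≤ r' i) ∧
        (∀ j : Fin N, ∑ i ∈ Iic j, ginv (r' i) ≤ ∑ i ∈ Iic j, E i) ∧
        (∀ j : Fin N, ∑ i ∈ Iic j, φ (r' i) ≤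
          ∑ i ∈ Iic j, (Ebar i + α * H i))) →
      ∑ i, r' i ≤ ∑ i, r i) :
    Monotone r :=
  stmt_2_general N E Ebar H α ginv φ hgconv hgmono hφconv hφmono r hfeas hopt
end

section
/- Under the same optimization as in the previous statement (maximize ∑ r_i subject to the two cumulative energy causality constraints), if the optimal solution satisfies r*_k < r*_{k+1} for some k, then at j = k at least one of the two constraints holds with equality: either ∑_{i=1}^k g⁻¹(r*_i) = ∑_{i=1}^k E_i or ∑_{i=1}^k φ(r*_i) = ∑_{i=1}^k (Ē_i + α H_i). -/
/-!
If neither constraint were tight at `k`, both would have slack there. Moving `r k` and `r k'` a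
small fraction `θ` towards each other keeps the constraint at `k`, and by strict convexity strictly
lowers `g⁻¹(r k) + g⁻¹(r k')` and `φ(r k) + φ(r k')`, hence the energy drawn by every prefix that
reaches `k'`. The energy freed this way pays for raising `r k'` by some small `t > 0`: the result is
a feasible schedule with a larger total rate, contradicting optimality.
-/

open Finset Filter Topology Function

section Convexity

variable {E : Type*} [AddCommGroup E] [Module ℝ E] {s : Set E} {f : E → ℝ} {x y : E}

lemma ConvexOn.eventually_lt_add (hf : ConvexOn ℝ s f) (hx : x ∈ s) (hy : y ∈ s) {ε : ℝ}
    (hε : 0 < ε) : ∀ᶠ θ in 𝓝[>] (0 : ℝ), f ((1 - θ) • x + θ • y) < f x + ε := by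
  have hsmall : ∀ᶠ θ in 𝓝 (0 : ℝ), θ * (f y - f x) < ε :=
    (continuous_mul_const (f y - f x)).tendsto 0 |>.eventually (gt_mem_nhds (by simpa using hε))
  filter_upwards [nhdsWithin_le_nhds hsmall, Ioo_mem_nhdsGT one_pos] with θ hθ ⟨hθ0, hθ1⟩
  calc f ((1 - θ) • x + θ • y) ≤ (1 - θ) • f x + θ • f y :=
        hf.2 hx hy (sub_nonneg.2 hθ1.le) hθ0.le (sub_add_cancel 1 θ)
    _ = f x + θ * (f y - f x) := by simp only [smul_eq_mul]; ring
    _ < f x + ε := by linarith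

lemma StrictConvexOn.map_comb_add_map_comb_lt (hf : StrictConvexOn ℝ s f) (hx : x ∈ s)
    (hy : y ∈ s) (hxy : x ≠ y) {θ : ℝ} (hθ0 : 0 < θ) (hθ1 : θ < 1) :
    f ((1 - θ) • x + θ • y) + f (θ • x + (1 - θ) • y) < f x + f y := by
  have h₁ := hf.2 hx hy hxy (sub_pos.2 hθ1) hθ0 (sub_add_cancel 1 θ)
  have h₂ := hf.2 hx hy hxy hθ0 (sub_pos.2 hθ1) (add_sub_cancel θ 1)
  simp only [smul_eq_mul] at h₁ h₂
  linarith

end Convexity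

section PrefixSums

variable {ι : Type*} [DecidableEq ι]

lemma Finset.sum_comp_update_of_mem {s : Finset ι} {k : ι} (hk : k ∈ s) (g : ℝ → ℝ)
    (r : ι → ℝ) (a : ℝ) :
    ∑ i ∈ s, g (update r k a i) = ∑ i ∈ s, g (r i) + (g a - g (r k)) := by
  rw [← add_sum_erase s _ hk, ← add_sum_erase s _ hk, update_self,
    sum_congr rfl fun i hi => by rw [update_of_ne (ne_of_mem_erase hi)]]
  ring

lemma Finset.sum_comp_update_update_of_mem {s : Finset ι} {k k' : ι} (hk : k ∈ s)
    (hk' : k' ∈ s) (hne : k ≠ k') (g : ℝ → ℝ) (r : ι → ℝ) (a b : ℝ) :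
    ∑ i ∈ s, g (update (update r k a) k' b i)
      = ∑ i ∈ s, g (r i) + (g a - g (r k)) + (g b - g (r k')) := by
  rw [sum_comp_update_of_mem hk', sum_comp_update_of_mem hk, update_of_ne hne.symm]

lemma prefix_le_of_update_update [LinearOrder ι] [LocallyFiniteOrderBot ι] {g : ℝ → ℝ}
    {c r : ι → ℝ} {k k' : ι} (hkk' : k ⋖ k') {a b : ℝ}
    (hr : ∀ j, ∑ i ∈ Iic j, g (r i) ≤ ∑ i ∈ Iic j, c i)
    (hk : ∑ i ∈ Iic k, g (r i) + (g a - g (r k)) ≤ ∑ i ∈ Iic k, c i)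
    (hab : g a + g b ≤ g (r k) + g (r k')) (j : ι) :
    ∑ i ∈ Iic j, g (update (update r k a) k' b i) ≤ ∑ i ∈ Iic j, c i := by
  rcases lt_trichotomy j k with hjk | rfl | hkj
  · have hunchanged : ∀ i ∈ Iic j, g (update (update r k a) k' b i) = g (r i) := fun i hi => by
      have hik : i < k := (mem_Iic.1 hi).trans_lt hjk
      rw [update_of_ne (hik.trans hkk'.lt).ne, update_of_ne hik.ne]
    rw [sum_congr rfl hunchanged]
    exact hr j
  · have hk'_fixed : ∀ i ∈ Iic j, g (update (update r j a) k' b i) = g (update r j a i) :=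
      fun i hi => by rw [update_of_ne ((mem_Iic.1 hi).trans_lt hkk'.lt).ne]
    rwa [sum_congr rfl hk'_fixed, sum_comp_update_of_mem (mem_Iic.2 le_rfl)]
  · have hk'j : k' ≤ j := not_lt.1 (hkk'.2 hkj)
    rw [sum_comp_update_update_of_mem (mem_Iic.2 hkj.le) (mem_Iic.2 hk'j) hkk'.lt.ne]
    linarith [hr j]

end PrefixSums

section Rebalance

variable {ι : Type*} [DecidableEq ι]

def rebalance (r : ι → ℝ) (k k' : ι) (θ t : ℝ) : ι → ℝ :=
  update (update r k ((1 - θ) * r k + θ * r k')) k' (θ * r k + (1 - θ) * r k' + t)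

lemma rebalance_nonneg {r : ι → ℝ} (hr : ∀ i, 0 ≤ r i) (k k' : ι) {θ t : ℝ} (hθ0 : 0 ≤ θ)
    (hθ1 : θ ≤ 1) (ht : 0 ≤ t) (i : ι) : 0 ≤ rebalance r k k' θ t i := by
  have := hr k
  have := hr k'
  simp only [rebalance, update_apply]
  split_ifs
  exacts [by nlinarith, by nlinarith, hr i]

lemma sum_rebalance [Fintype ι] (r : ι → ℝ) {k k' : ι} (hne : k ≠ k') (θ t : ℝ) :
    ∑ i, rebalance r k k' θ t i = ∑ i, r i + t := by
  have h := sum_comp_update_update_of_mem (mem_univ k) (mem_univ k') hne id r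
    ((1 - θ) * r k + θ * r k') (θ * r k + (1 - θ) * r k' + t)
  simp only [id] at h
  rw [rebalance, h]
  ring

lemma eventually_prefix_le_rebalance [LinearOrder ι] [LocallyFiniteOrderBot ι] {g : ℝ → ℝ}
    (hg : StrictConvexOn ℝ (Set.Ici 0) g) {c r : ι → ℝ} (hr0 : ∀ i, 0 ≤ r i) {k k' : ι}
    (hkk' : k ⋖ k') (hne : r k ≠ r k') (hr : ∀ j, ∑ i ∈ Iic j, g (r i) ≤ ∑ i ∈ Iic j, c i)
    (hk : ∑ i ∈ Iic k, g (r i) < ∑ i ∈ Iic k, c i) :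
    ∀ᶠ θ in 𝓝[>] (0 : ℝ), ∀ᶠ t in 𝓝[>] (0 : ℝ),
      ∀ j, ∑ i ∈ Iic j, g (rebalance r k k' θ t i) ≤ ∑ i ∈ Iic j, c i := by
  have hx : r k ∈ Set.Ici 0 := hr0 k
  have hy : r k' ∈ Set.Ici 0 := hr0 k'
  filter_upwards [hg.convexOn.eventually_lt_add hx hy (sub_pos.2 hk),
    Ioo_mem_nhdsGT one_pos] with θ hθk ⟨hθ0, hθ1⟩
  have hfreed := hg.map_comb_add_map_comb_lt hx hy hne hθ0 hθ1
  simp only [smul_eq_mul] at hθk hfreed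
  set b := θ * r k + (1 - θ) * r k'
  have hb : b ∈ Set.Ici 0 :=
    convex_Ici 0 hx hy hθ0.le (sub_pos.2 hθ1).le (add_sub_cancel θ 1)
  have hb1 : b + 1 ∈ Set.Ici 0 := by simp only [Set.mem_Ici] at hb ⊢; linarith
  filter_upwards [hg.convexOn.eventually_lt_add hb hb1 (sub_pos.2 hfreed)] with t ht
  have hbt : (1 - t) • b + t • (b + 1) = b + t := by simp only [smul_eq_mul]; ring
  rw [hbt] at ht
  exact prefix_le_of_update_update hkk' hr (by linarith) (by linarith)

end Rebalance

theorem stmt_3_general (N : ℕ)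
    (E Ebar H : Fin N → ℝ)
    (α : ℝ)
    (ginv φ : ℝ → ℝ)
    (hgconv : StrictConvexOn ℝ (Set.Ici 0) ginv)
    (hφconv : StrictConvexOn ℝ (Set.Ici 0) φ)
    (r : Fin N → ℝ)
    (hfeas : (∀ i, 0 ≤ r i) ∧
      (∀ j : Fin N, ∑ i ∈ Iic j, ginv (r i) ≤ ∑ i ∈ Iic j, E i) ∧
      (∀ j : Fin N, ∑ i ∈ Iic j, φ (r i) ≤ ∑ i ∈ Iic j, (Ebar i + α * H i)))
    (hopt : ∀ r' : Fin N → ℝ,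
      ((∀ i, 0 ≤ r' i) ∧
        (∀ j : Fin N, ∑ i ∈ Iic j, ginv (r' i) ≤ ∑ i ∈ Iic j, E i) ∧
        (∀ j : Fin N, ∑ i ∈ Iic j, φ (r' i) ≤
          ∑ i ∈ Iic j, (Ebar i + α * H i))) →
      ∑ i, r' i ≤ ∑ i, r i)
    (k k' : Fin N) (hkk' : (k : ℕ) + 1 = (k' : ℕ)) (hlt : r k < r k') :
    (∑ i ∈ Iic k, ginv (r i) = ∑ i ∈ Iic k, E i) ∨
    (∑ i ∈ Iic k, φ (r i) = ∑ i ∈ Iic k, (Ebar i + α * H i)) := by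
  obtain ⟨hr0, hg, hφ⟩ := hfeas
  by_contra! hslack
  have hcov : k ⋖ k' := Fin.covBy_iff.2 (Nat.covBy_iff_add_one_eq.2 hkk')
  obtain ⟨θ, hθg, hθφ, hθ0, hθ1⟩ :=
    ((eventually_prefix_le_rebalance hgconv hr0 hcov hlt.ne hg ((hg k).lt_of_ne hslack.1)).and
      ((eventually_prefix_le_rebalance hφconv hr0 hcov hlt.ne hφ ((hφ k).lt_of_ne hslack.2)).and
        (Ioo_mem_nhdsGT one_pos))).exists
  obtain ⟨t, htg, htφ, ht0 : 0 < t⟩ := (hθg.and (hθφ.and eventually_mem_nhdsWithin)).exists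
  have hle := hopt _ ⟨rebalance_nonneg hr0 k k' hθ0.le hθ1.le ht0.le, htg, htφ⟩
  rw [sum_rebalance r hcov.lt.ne] at hle
  linarith

/-- Lemma 3: if the optimal rate strictly increases from slot `k` to `k+1`,
then at `j = k` at least one of the two cumulative constraints is tight. -/
theorem stmt_3 (N : ℕ) (hN : 0 < N)
    (E Ebar H : Fin N → ℝ)
    (hE : ∀ i, 0 ≤ E i) (hEbar : ∀ i, 0 ≤ Ebar i) (hH : ∀ i, 0 ≤ H i)
    (α : ℝ) (hα0 : 0 ≤ α) (hα1 : α ≤ 1)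
    (ginv φ : ℝ → ℝ)
    (hgconv : StrictConvexOn ℝ (Set.Ici 0) ginv)
    (hgmono : StrictMonoOn ginv (Set.Ici 0))
    (hφconv : StrictConvexOn ℝ (Set.Ici 0) φ)
    (hφmono : StrictMonoOn φ (Set.Ici 0))
    (r : Fin N → ℝ)
    (hfeas : (∀ i, 0 ≤ r i) ∧
      (∀ j : Fin N, ∑ i ∈ Iic j, ginv (r i) ≤ ∑ i ∈ Iic j, E i) ∧
      (∀ j : Fin N, ∑ i ∈ Iic j, φ (r i) ≤ ∑ i ∈ Iic j, (Ebar i + α * H i)))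
    (hopt : ∀ r' : Fin N → ℝ,
      ((∀ i, 0 ≤ r' i) ∧
        (∀ j : Fin N, ∑ i ∈ Iic j, ginv (r' i) ≤ ∑ i ∈ Iic j, E i) ∧
        (∀ j : Fin N, ∑ i ∈ Iic j, φ (r' i) ≤
          ∑ i ∈ Iic j, (Ebar i + α * H i))) →
      ∑ i, r' i ≤ ∑ i, r i)
    (k k' : Fin N) (hkk' : (k : ℕ) + 1 = (k' : ℕ)) (hlt : r k < r k') :
    (∑ i ∈ Iic k, ginv (r i) = ∑ i ∈ Iic k, E i) ∨
    (∑ i ∈ Iic k, φ (r i) = ∑ i ∈ Iic k, (Ebar i + α * H i)) :=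
  stmt_3_general N E Ebar H α ginv φ hgconv hφconv r hfeas hopt k k' hkk' hlt
end

section
/- Let f : ℝ≥0 → ℝ be strictly concave and increasing (the inverse decoding cost function φ⁻¹). In the problem of maximizing ∑_{i=1}^N f(q_i) over q subject to q_i ≥ Ē_i for all i and ∑_{i=1}^j q_i ≤ ∑_{i=1}^j (Ē_i + α H_i) for all j, if the optimal q* satisfies q*_n < q*_m for some m < n, then q*_m = Ē_m. -/
/-!
If `q m > Ebar m`, shift a small amount `ε < min (q m - q n) (q m - Ebar m)` of power from slot
`m` to the later slot `n`. The floor constraints still hold, and every prefix sum either is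
unchanged or drops by `ε`, because no prefix contains `n` without `m`. Since `q n < q m`, strict
concavity makes `f (q n + ε) + f (q m - ε)` exceed `f (q n) + f (q m)`, contradicting optimality.
-/

open Finset

theorem StrictConcaveOn.add_lt_add_of_shift {s : Set ℝ} {f : ℝ → ℝ} (hf : StrictConcaveOn ℝ s f)
    {a b ε : ℝ} (ha : a ∈ s) (hb : b ∈ s) (hε : 0 < ε) (hεab : ε < b - a) :
    f a + f b < f (a + ε) + f (b - ε) := by
  have hab : 0 < b - a := hε.trans hεab
  set t := ε / (b - a)
  have ht0 : 0 < t := div_pos hε hab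
  have ht1 : t < 1 := (div_lt_one hab).2 hεab
  have htε : t * (b - a) = ε := div_mul_cancel₀ ε hab.ne'
  have hne : a ≠ b := by linarith
  have hleft := hf.2 ha hb hne (sub_pos.2 ht1) ht0 (sub_add_cancel 1 t)
  have hright := hf.2 ha hb hne ht0 (sub_pos.2 ht1) (add_sub_cancel t 1)
  simp only [smul_eq_mul] at hleft hright
  rw [show (1 - t) * a + t * b = a + ε by linear_combination htε] at hleft
  rw [show t * a + (1 - t) * b = b - ε by linear_combination -htε] at hright
  linarith

def transfer {ι M : Type*} [DecidableEq ι] [AddGroup M] (q : ι → M) (m n : ι) (ε : M) : ι → M :=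
  q + Pi.single n ε - Pi.single m ε

section transfer

variable {ι M : Type*} [DecidableEq ι] [AddCommGroup M] {q : ι → M} {m n : ι} {ε : M}

theorem transfer_apply_left (hmn : m ≠ n) : transfer q m n ε m = q m - ε := by
  simp [transfer, hmn]

theorem transfer_apply_right (hmn : m ≠ n) : transfer q m n ε n = q n + ε := by
  simp [transfer, hmn.symm]

theorem transfer_apply_of_ne {i : ι} (him : i ≠ m) (hin : i ≠ n) : transfer q m n ε i = q i := by
  simp [transfer, him, hin]

theorem sum_transfer (s : Finset ι) :
    ∑ i ∈ s, transfer q m n ε i =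
      ∑ i ∈ s, q i + (if n ∈ s then ε else 0) - (if m ∈ s then ε else 0) := by
  simp only [transfer, Pi.sub_apply, Pi.add_apply, sum_sub_distrib, sum_add_distrib,
    sum_pi_single']

theorem sum_Iic_transfer_le [PartialOrder M] [IsOrderedAddMonoid M] [Preorder ι]
    [LocallyFiniteOrderBot ι] (hmn : m ≤ n) (hε : 0 ≤ ε) (j : ι) :
    ∑ i ∈ Iic j, transfer q m n ε i ≤ ∑ i ∈ Iic j, q i := by
  rw [sum_transfer]
  by_cases hn : n ≤ j
  · simp [hn, hmn.trans hn]
  · by_cases hm : m ≤ j <;> simp [hn, hm, hε]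

theorem sum_comp_transfer [Fintype ι] (g : M → ℝ) (hmn : m ≠ n) :
    ∑ i, g (transfer q m n ε i) =
      ∑ i, g (q i) + (g (q m - ε) - g (q m)) + (g (q n + ε) - g (q n)) := by
  have hdiff : ∑ i, (g (transfer q m n ε i) - g (q i)) =
      (g (q m - ε) - g (q m)) + (g (q n + ε) - g (q n)) := by
    rw [Fintype.sum_eq_add m n hmn fun i hi => by
      rw [transfer_apply_of_ne hi.1 hi.2, sub_self], transfer_apply_left hmn,
      transfer_apply_right hmn]
  rw [sum_sub_distrib] at hdiff
  linarith

end transfer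

theorem stmt_4_general (N : ℕ)
    (Ebar H : Fin N → ℝ)
    (hEbar : ∀ i, 0 ≤ Ebar i)
    (α : ℝ)
    (f : ℝ → ℝ)
    (hconc : StrictConcaveOn ℝ (Set.Ici 0) f)
    (q : Fin N → ℝ)
    (hfeas : (∀ i, Ebar i ≤ q i) ∧
      (∀ j : Fin N, ∑ i ∈ Iic j, q i ≤ ∑ i ∈ Iic j, (Ebar i + α * H i)))
    (hopt : ∀ q' : Fin N → ℝ,
      ((∀ i, Ebar i ≤ q' i) ∧
        (∀ j : Fin N, ∑ i ∈ Iic j, q' i ≤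
          ∑ i ∈ Iic j, (Ebar i + α * H i))) →
      ∑ i, f (q' i) ≤ ∑ i, f (q i))
    (m n : Fin N) (hmn : m < n) (hq : q n < q m) :
    q m = Ebar m := by
  obtain ⟨hlow, hcum⟩ := hfeas
  by_contra hne
  have hslack : 0 < q m - Ebar m := sub_pos.2 ((hlow m).lt_of_ne' hne)
  obtain ⟨ε, hε, hεlt⟩ := exists_between (lt_min (sub_pos.2 hq) hslack)
  obtain ⟨hεgap, hεslack⟩ := lt_min_iff.1 hεlt
  have hlow' : ∀ i, Ebar i ≤ transfer q m n ε i := by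
    intro i
    by_cases him : i = m
    · rw [him, transfer_apply_left hmn.ne]; linarith
    by_cases hin : i = n
    · rw [hin, transfer_apply_right hmn.ne]; linarith [hlow n]
    · rw [transfer_apply_of_ne him hin]; exact hlow i
  have hcum' : ∀ j, ∑ i ∈ Iic j, transfer q m n ε i ≤ ∑ i ∈ Iic j, (Ebar i + α * H i) :=
    fun j => (sum_Iic_transfer_le hmn.le hε.le j).trans (hcum j)
  have hgain := hconc.add_lt_add_of_shift ((hEbar n).trans (hlow n))
    ((hEbar m).trans (hlow m)) hε hεgap
  have := hopt _ ⟨hlow', hcum'⟩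
  rw [sum_comp_transfer f hmn.ne] at this
  linarith

/-- Lemma 4: in the full-power-transmitter / non-battery-receiver problem,
if a later optimal power is smaller than an earlier one, then the earlier slot
consumes exactly its own harvested energy. -/
theorem stmt_4 (N : ℕ) (hN : 0 < N)
    (Ebar H : Fin N → ℝ)
    (hEbar : ∀ i, 0 ≤ Ebar i) (hH : ∀ i, 0 ≤ H i)
    (α : ℝ) (hα0 : 0 ≤ α) (hα1 : α ≤ 1)
    (f : ℝ → ℝ)
    (hconc : StrictConcaveOn ℝ (Set.Ici 0) f)
    (hmono : StrictMonoOn f (Set.Ici 0))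
    (q : Fin N → ℝ)
    (hfeas : (∀ i, Ebar i ≤ q i) ∧
      (∀ j : Fin N, ∑ i ∈ Iic j, q i ≤ ∑ i ∈ Iic j, (Ebar i + α * H i)))
    (hopt : ∀ q' : Fin N → ℝ,
      ((∀ i, Ebar i ≤ q' i) ∧
        (∀ j : Fin N, ∑ i ∈ Iic j, q' i ≤
          ∑ i ∈ Iic j, (Ebar i + α * H i))) →
      ∑ i, f (q' i) ≤ ∑ i, f (q i))
    (m n : Fin N) (hmn : m < n) (hq : q n < q m) :
    q m = Ebar m :=
  stmt_4_general N Ebar H hEbar α f hconc q hfeas hopt m n hmn hq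
end

section
/- For a strictly concave increasing function f and energies S_i ≥ 0, the 'waterfilling' problem of maximizing ∑_{i=1}^N f(q_i) subject only to cumulative causality ∑_{i=1}^j q_i ≤ ∑_{i=1}^j S_i for all j and q_i ≥ 0 has a unique optimal solution, and this optimal solution q̂ satisfies q̂_i ≤ q̂_{i+1} for all i (water levels are nondecreasing over time). -/
/-!
The causal schedules form a compact convex subset of `[0, ∞)^N` on which `q ↦ ∑ f (q i)` is
strictly concave, so there is at most one optimum. If an optimum had `q i > q j` for some `i < j`,
swapping the two entries would only delay energy, hence keep the schedule feasible with the same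
value; uniqueness then forces `q i = q j`, so the optimum is nondecreasing.

Existence is the delicate part: `f` may jump down at `0`, so the objective need not be upper
semicontinuous. Replacing `f 0` by `f (0+)` gives a continuous, strictly concave, increasing
`g ≥ f`, and `∑ g` attains its maximum at some `q̂`, which is nondecreasing by the argument above.
It vanishes only where the cumulative budget `∑_{k ≤ i} S k` is zero: otherwise moving a little
energy from the first positive entry back to a zero entry (or, if `q̂ = 0`, adding some) would
increase `∑ g`. Every feasible `q` vanishes at those indices too, so `f` and `g` differ only where
`q` and `q̂` agree, and `∑ f q - ∑ f q̂ ≤ ∑ g q - ∑ g q̂ ≤ 0`.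
-/

open Finset Filter Topology

theorem StrictConcaveOn.add_lt_add_of_lt_sub {s : Set ℝ} {G : ℝ → ℝ}
    (hG : StrictConcaveOn ℝ s G) {a b d : ℝ} (ha : a ∈ s) (hb : b ∈ s) (hd : 0 < d)
    (hdb : d < b - a) : G a + G b < G (a + d) + G (b - d) := by
  have hab : 0 < b - a := hd.trans hdb
  set t := d / (b - a)
  have ht : 0 < t := div_pos hd hab
  have ht1 : t < 1 := (div_lt_one hab).2 hdb
  have htd : t * (b - a) = d := div_mul_cancel₀ d hab.ne'
  have h1 := hG.2 ha hb (by linarith) (sub_pos.2 ht1) ht (by ring)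
  have h2 := hG.2 ha hb (by linarith) ht (sub_pos.2 ht1) (by ring)
  simp only [smul_eq_mul] at h1 h2
  rw [show (1 - t) * a + t * b = a + d by linear_combination htd] at h1
  rw [show t * a + (1 - t) * b = b - d by linear_combination -htd] at h2
  linarith

theorem StrictConcaveOn.sum_apply {ι : Type*} [Fintype ι] {s : Set ℝ} {G : ℝ → ℝ}
    (hG : StrictConcaveOn ℝ s G) :
    StrictConcaveOn ℝ (Set.univ.pi fun _ : ι => s) (fun q : ι → ℝ => ∑ i, G (q i)) := by
  refine ⟨convex_pi fun _ _ => hG.1, fun x hx y hy hxy a b ha hb hab => ?_⟩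
  obtain ⟨i, hi⟩ := Function.ne_iff.1 hxy
  simp only [smul_eq_mul, mul_sum, ← sum_add_distrib, Pi.add_apply, Pi.smul_apply]
  exact sum_lt_sum (fun j _ => hG.concaveOn.2 (hx j trivial) (hy j trivial) ha.le hb.le hab)
    ⟨i, mem_univ _, hG.2 (hx i trivial) (hy i trivial) hi ha hb hab⟩

namespace Waterfilling

variable {N : ℕ}

def causalSet (S : Fin N → ℝ) : Set (Fin N → ℝ) :=
  {q | (∀ i, 0 ≤ q i) ∧ ∀ j, ∑ i ∈ Iic j, q i ≤ ∑ i ∈ Iic j, S i}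

def utility (G : ℝ → ℝ) (q : Fin N → ℝ) : ℝ := ∑ i, G (q i)

variable {S q : Fin N → ℝ}

lemma sum_Iic_mono (hS : ∀ i, 0 ≤ S i) {j k : Fin N} (hjk : j ≤ k) :
    ∑ i ∈ Iic j, S i ≤ ∑ i ∈ Iic k, S i :=
  sum_le_sum_of_subset_of_nonneg (Iic_subset_Iic.2 hjk) fun i _ _ => hS i

lemma apply_le_sum_Iic (hq : q ∈ causalSet S) (j : Fin N) : q j ≤ ∑ i ∈ Iic j, S i :=
  (single_le_sum (fun i _ => hq.1 i) (mem_Iic.2 le_rfl)).trans (hq.2 j)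

lemma zero_mem_causalSet (hS : ∀ i, 0 ≤ S i) : 0 ∈ causalSet S :=
  ⟨fun _ => le_rfl, fun j => by simpa using sum_nonneg fun i _ => hS i⟩

lemma causalSet_subset_pi : causalSet S ⊆ Set.univ.pi fun _ => Set.Ici 0 :=
  fun _ hq i _ => hq.1 i

lemma convex_causalSet : Convex ℝ (causalSet S) := by
  intro x hx y hy a b ha hb hab
  refine ⟨fun i => ?_, fun j => ?_⟩
  · simpa using add_nonneg (mul_nonneg ha (hx.1 i)) (mul_nonneg hb (hy.1 i))
  · simp only [Pi.add_apply, Pi.smul_apply, smul_eq_mul, sum_add_distrib, ← mul_sum]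
    have hxj := mul_le_mul_of_nonneg_left (hx.2 j) ha
    have hyj := mul_le_mul_of_nonneg_left (hy.2 j) hb
    linear_combination hxj + hyj + (∑ i ∈ Iic j, S i) * hab

lemma isCompact_causalSet : IsCompact (causalSet S) := by
  have hclosed : IsClosed (causalSet S) := by
    simp only [causalSet, Set.ofPred_and, Set.ofPred_forall]
    exact (isClosed_iInter fun i => isClosed_le continuous_const (continuous_apply i)).inter
      (isClosed_iInter fun j => isClosed_le (by fun_prop) continuous_const)
  refine (isCompact_univ_pi fun j => isCompact_Icc).of_isClosed_subset hclosed
    fun q hq j _ => ⟨hq.1 j, apply_le_sum_Iic hq j⟩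

lemma exists_isMaxOn_utility (hS : ∀ i, 0 ≤ S i) {G : ℝ → ℝ} (hG : ContinuousOn G (Set.Ici 0)) :
    ∃ q ∈ causalSet S, IsMaxOn (utility G) (causalSet S) q :=
  isCompact_causalSet.exists_isMaxOn ⟨0, zero_mem_causalSet hS⟩ <|
    continuousOn_finsetSum _ fun i _ =>
      hG.comp (continuous_apply i).continuousOn fun _ hq => hq.1 i

lemma add_single_sub_single_mem_causalSet (hq : q ∈ causalSet S) {i j : Fin N} (hij : i < j)
    {d : ℝ} (hi : 0 ≤ q i + d) (hj : 0 ≤ q j - d)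
    (hslack : ∀ k, i ≤ k → k < j → ∑ m ∈ Iic k, q m + d ≤ ∑ m ∈ Iic k, S m) :
    q + Pi.single i d - Pi.single j d ∈ causalSet S := by
  refine ⟨fun m => ?_, fun k => ?_⟩
  · rcases eq_or_ne m i with rfl | hmi
    · simpa [hij.ne] using hi
    · rcases eq_or_ne m j with rfl | hmj
      · simpa [hmi] using hj
      · simpa [hmi, hmj] using hq.1 m
  · simp only [Pi.sub_apply, Pi.add_apply, sum_sub_distrib, sum_add_distrib, sum_pi_single',
      mem_Iic]
    by_cases hjk : j ≤ k
    · simpa [hjk, hij.le.trans hjk] using hq.2 k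
    · by_cases hik : i ≤ k
      · simpa [hik, hjk] using hslack k hik (not_le.1 hjk)
      · simpa [hik, hjk] using hq.2 k

lemma utility_add_single_sub_single (G : ℝ → ℝ) (q : Fin N → ℝ) {i j : Fin N} (hij : i ≠ j)
    (d : ℝ) : utility G (q + Pi.single i d - Pi.single j d) =
      utility G q + (G (q i + d) - G (q i)) + (G (q j - d) - G (q j)) := by
  have hdiff : ∑ m, (G ((q + Pi.single i d - Pi.single j d : Fin N → ℝ) m) - G (q m)) =
      (G (q i + d) - G (q i)) + (G (q j - d) - G (q j)) := by
    rw [Fintype.sum_eq_add i j hij fun m ⟨hmi, hmj⟩ => by simp [hmi, hmj]]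
    simp [hij, hij.symm]
  rw [sum_sub_distrib] at hdiff
  simp only [utility]
  linarith

variable {G : ℝ → ℝ}

lemma eq_of_isMaxOn_utility (hG : StrictConcaveOn ℝ (Set.Ici 0) G) {q₁ q₂ : Fin N → ℝ}
    (h₁ : q₁ ∈ causalSet S) (h₂ : q₂ ∈ causalSet S)
    (hmax₁ : IsMaxOn (utility G) (causalSet S) q₁) (hmax₂ : IsMaxOn (utility G) (causalSet S) q₂) :
    q₁ = q₂ :=
  (hG.sum_apply.subset causalSet_subset_pi convex_causalSet).eq_of_isMaxOn hmax₁ hmax₂ h₁ h₂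

lemma monotone_of_isMaxOn_utility (hG : StrictConcaveOn ℝ (Set.Ici 0) G) (hq : q ∈ causalSet S)
    (hmax : IsMaxOn (utility G) (causalSet S) q) : Monotone q := by
  intro i j hij
  by_contra! hlt
  have hij : i < j := hij.lt_of_ne (by rintro rfl; exact lt_irrefl _ hlt)
  -- swapping the entries moves mass to a later slot, which preserves causality and the utility
  have hswap : q ∘ Equiv.swap i j = q + Pi.single i (q j - q i) - Pi.single j (q j - q i) := by
    funext m
    rcases eq_or_ne m i with rfl | hmi
    · simp [hij.ne]
    · rcases eq_or_ne m j with rfl | hmj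
      · simp [hmi]
      · simp [hmi, hmj, Equiv.swap_apply_of_ne_of_ne]
  have hmem : q ∘ Equiv.swap i j ∈ causalSet S := by
    rw [hswap]
    exact add_single_sub_single_mem_causalSet hq hij (by simpa using hq.1 j)
      (by simpa using hq.1 i) fun k _ _ => by linarith [hq.2 k]
  have hmax' : IsMaxOn (utility G) (causalSet S) (q ∘ Equiv.swap i j) := fun q' hq' =>
    (hmax hq').trans_eq (Equiv.sum_comp (Equiv.swap i j) fun m => G (q m)).symm
  have := congr_fun (eq_of_isMaxOn_utility hG hmem hq hmax' hmax) i
  simp only [Function.comp_apply, Equiv.swap_apply_left] at this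
  linarith

lemma exists_ne_zero_of_isMaxOn_utility (hS : ∀ i, 0 ≤ S i) (hG : StrictMonoOn G (Set.Ici 0))
    (hmax : IsMaxOn (utility G) (causalSet S) q) {i : Fin N} (hT : 0 < ∑ k ∈ Iic i, S k) :
    ∃ l, q l ≠ 0 := by
  set T := ∑ k ∈ Iic i, S k
  by_contra! hzero
  have hp : (Pi.single i T : Fin N → ℝ) ∈ causalSet S := by
    refine ⟨fun m => ?_, fun k => ?_⟩
    · rcases eq_or_ne m i with rfl | hmi <;> simp [*, hT.le]
    · rw [sum_pi_single']
      split_ifs with hik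
      · exact sum_Iic_mono hS (mem_Iic.1 hik)
      · exact sum_nonneg fun m _ => hS m
  refine (isMaxOn_iff.1 hmax _ hp).not_gt (sum_lt_sum (fun m _ => ?_) ⟨i, mem_univ _, ?_⟩)
  · rw [hzero m]
    exact hG.monotoneOn Set.self_mem_Ici (hp.1 m) (hp.1 m)
  · simpa [hzero i] using hG Set.self_mem_Ici hT.le hT

lemma sum_Iic_le_zero_of_isMaxOn_utility (hS : ∀ i, 0 ≤ S i)
    (hG : StrictConcaveOn ℝ (Set.Ici 0) G) (hG' : StrictMonoOn G (Set.Ici 0))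
    (hq : q ∈ causalSet S) (hmax : IsMaxOn (utility G) (causalSet S) q) {i : Fin N}
    (hqi : q i = 0) : ∑ k ∈ Iic i, S k ≤ 0 := by
  set T := ∑ k ∈ Iic i, S k
  by_contra! hT
  -- move a little mass from the first nonzero slot `l` back to the empty slot `i < l`
  obtain ⟨l, hl, hfirst⟩ := wellFounded_lt.has_min {l | q l ≠ 0}
    (exists_ne_zero_of_isMaxOn_utility hS hG' hmax hT)
  have hlpos : 0 < q l := (hq.1 l).lt_of_ne (Ne.symm hl)
  have hil : i < l := lt_of_not_ge fun h => by linarith [monotone_of_isMaxOn_utility hG hq hmax h]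
  set d := min (q l) T / 2 with hd_def
  have hd : 0 < d := by positivity
  have hdl : d < q l := by linarith [min_le_left (q l) T, hd_def]
  have hdT : d ≤ T := by linarith [min_le_right (q l) T, hd_def]
  have hmem := add_single_sub_single_mem_causalSet hq hil (d := d) (by linarith) (by linarith)
    fun k hik hkl => by
      rw [sum_eq_zero fun m hm => not_not.1 fun h => hfirst m h ((mem_Iic.1 hm).trans_lt hkl),
        zero_add]
      exact hdT.trans (sum_Iic_mono hS hik)
  have hgain := hG.add_lt_add_of_lt_sub (a := 0) (b := q l) Set.self_mem_Ici (hq.1 l) hd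
    (by linarith)
  refine (isMaxOn_iff.1 hmax _ hmem).not_gt ?_
  rw [utility_add_single_sub_single G q hil.ne d, hqi]
  linarith

section RegAtZero

variable {f : ℝ → ℝ} {x : ℝ}

/-- `f` with `f 0` replaced by the right limit `f (0+)`: a concave function on `[0, ∞)` is
continuous on `(0, ∞)` but may jump down at `0`. -/
noncomputable def regAtZero (f : ℝ → ℝ) (x : ℝ) : ℝ :=
  if 0 < x then f x else sInf (f '' Set.Ioi 0)

lemma regAtZero_of_pos (hx : 0 < x) : regAtZero f x = f x := if_pos hx

lemma tendsto_regAtZero_zero (hf : MonotoneOn f (Set.Ici 0)) :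
    Tendsto f (𝓝[>] 0) (𝓝 (regAtZero f 0)) := by
  rw [regAtZero, if_neg (lt_irrefl 0)]
  refine (hf.mono Set.Ioi_subset_Ici_self).tendsto_nhdsGT ⟨f 0, ?_⟩
  rintro _ ⟨y, hy, rfl⟩
  exact hf Set.self_mem_Ici (Set.mem_Ici.2 (le_of_lt hy)) (le_of_lt hy)

lemma regAtZero_zero_le (hf : MonotoneOn f (Set.Ici 0)) (hx : 0 < x) : regAtZero f 0 ≤ f x :=
  le_of_tendsto (tendsto_regAtZero_zero hf) <| eventually_of_mem (Ioo_mem_nhdsGT hx)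
    fun _ hy => hf (Set.mem_Ici.2 hy.1.le) (Set.mem_Ici.2 hx.le) hy.2.le

lemma le_regAtZero (hf : MonotoneOn f (Set.Ici 0)) (hx : 0 ≤ x) : f x ≤ regAtZero f x := by
  rcases hx.eq_or_lt with rfl | hx
  · exact ge_of_tendsto (tendsto_regAtZero_zero hf) <| eventually_of_mem self_mem_nhdsWithin
      fun _ hy => hf Set.self_mem_Ici (Set.mem_Ici.2 (le_of_lt hy)) (le_of_lt hy)
  · rw [regAtZero_of_pos hx]

lemma strictMonoOn_regAtZero (hf : StrictMonoOn f (Set.Ici 0)) :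
    StrictMonoOn (regAtZero f) (Set.Ici 0) := by
  intro x hx y hy hxy
  have hy' : 0 < y := lt_of_le_of_lt hx hxy
  rw [regAtZero_of_pos hy']
  rcases (Set.mem_Ici.1 hx).eq_or_lt with rfl | hx'
  · exact (regAtZero_zero_le hf.monotoneOn (half_pos hy')).trans_lt
      (hf (Set.mem_Ici.2 (half_pos hy').le) hy (half_lt_self hy'))
  · rw [regAtZero_of_pos hx']
    exact hf hx hy hxy

lemma continuousOn_regAtZero (hconc : ConcaveOn ℝ (Set.Ici 0) f) (hf : MonotoneOn f (Set.Ici 0)) :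
    ContinuousOn (regAtZero f) (Set.Ici 0) := by
  have hcont : ContinuousOn f (Set.Ioi 0) :=
    (hconc.subset Set.Ioi_subset_Ici_self (convex_Ioi 0)).continuousOn isOpen_Ioi
  have heq : ∀ x, 0 < x → regAtZero f =ᶠ[𝓝 x] f := fun x hx =>
    eventually_of_mem (Ioi_mem_nhds hx) fun _ hy => regAtZero_of_pos hy
  intro x hx
  rcases (Set.mem_Ici.1 hx).eq_or_lt with rfl | hx
  · rw [← continuousWithinAt_Ioi_iff_Ici, ContinuousWithinAt]
    exact (tendsto_regAtZero_zero hf).congr' <|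
      eventually_of_mem self_mem_nhdsWithin fun _ hy => (regAtZero_of_pos hy).symm
  · exact ((hcont.continuousAt (Ioi_mem_nhds hx)).congr (heq x hx).symm).continuousWithinAt

lemma one_sub_mul_regAtZero_add_mul_le (hconc : ConcaveOn ℝ (Set.Ici 0) f)
    (hf : MonotoneOn f (Set.Ici 0)) {t y : ℝ} (ht : 0 < t) (ht1 : t < 1) (hy : 0 < y) :
    (1 - t) * regAtZero f 0 + t * f y ≤ f (t * y) := by
  have hcont : ContinuousAt f (t * y) :=
    (hconc.subset Set.Ioi_subset_Ici_self (convex_Ioi 0)).continuousOn isOpen_Ioi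
      |>.continuousAt (Ioi_mem_nhds (mul_pos ht hy))
  have hlim : Tendsto (fun s => f ((1 - t) * s + t * y)) (𝓝[>] 0) (𝓝 (f (t * y))) := by
    refine hcont.tendsto.comp (Tendsto.mono_left ?_ nhdsWithin_le_nhds)
    simpa using ((continuous_const.mul continuous_id).add continuous_const).tendsto
      (f := fun s : ℝ => (1 - t) * s + t * y) 0
  refine le_of_tendsto_of_tendsto
    (((tendsto_regAtZero_zero hf).const_mul (1 - t)).add_const (t * f y)) hlim <|
    eventually_of_mem self_mem_nhdsWithin fun s hs => ?_
  simpa using hconc.2 (Set.mem_Ici.2 (le_of_lt hs)) (Set.mem_Ici.2 hy.le) (sub_pos.2 ht1).le ht.le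
    (by ring)

lemma strictConcaveOn_regAtZero (hconc : StrictConcaveOn ℝ (Set.Ici 0) f)
    (hf : MonotoneOn f (Set.Ici 0)) : StrictConcaveOn ℝ (Set.Ici 0) (regAtZero f) := by
  refine LinearOrder.strictConcaveOn_of_lt (convex_Ici 0) fun x hx y hy hxy a b ha hb hab => ?_
  have hy' : 0 < y := lt_of_le_of_lt hx hxy
  have hz : 0 < a * x + b * y := add_pos_of_nonneg_of_pos (mul_nonneg ha.le hx) (mul_pos hb hy')
  simp only [smul_eq_mul]
  rw [regAtZero_of_pos hy', regAtZero_of_pos hz]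
  rcases (Set.mem_Ici.1 hx).eq_or_lt with rfl | hx'
  · -- `b * y` lies strictly between `b ^ 2 * y` and `y`, and at `b ^ 2 * y` the limit bound applies
    have hb2 : b ^ 2 < 1 := pow_lt_one₀ hb.le (by linarith) two_ne_zero
    have hweak := one_sub_mul_regAtZero_add_mul_le hconc.concaveOn hf (pow_pos hb 2) hb2 hy'
    have hstrict := hconc.2 (Set.mem_Ici.2 (by positivity : 0 ≤ b ^ 2 * y)) hy
      (by nlinarith : b ^ 2 * y ≠ y) (by positivity : 0 < 1 / (1 + b))
      (by positivity : 0 < b / (1 + b)) (by field_simp)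
    simp only [smul_eq_mul] at hstrict
    rw [show 1 / (1 + b) * (b ^ 2 * y) + b / (1 + b) * y = b * y by field_simp; ring] at hstrict
    field_simp at hstrict
    rw [mul_zero, zero_add, show a = 1 - b by linarith]
    refine lt_of_mul_lt_mul_left ?_ (by positivity : (0 : ℝ) ≤ 1 + b)
    linarith
  · rw [regAtZero_of_pos hx']
    simpa using hconc.2 hx hy hxy.ne ha hb hab

end RegAtZero

lemma isMaxOn_utility_of_regAtZero {f : ℝ → ℝ} (hS : ∀ i, 0 ≤ S i)
    (hconc : StrictConcaveOn ℝ (Set.Ici 0) f) (hmono : StrictMonoOn f (Set.Ici 0))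
    (hq : q ∈ causalSet S) (hmax : IsMaxOn (utility (regAtZero f)) (causalSet S) q) :
    IsMaxOn (utility f) (causalSet S) q := by
  refine isMaxOn_iff.2 fun q' hq' => ?_
  have hzero : ∀ k, q k = 0 → q' k = 0 := fun k hk =>
    le_antisymm ((apply_le_sum_Iic hq' k).trans <| sum_Iic_le_zero_of_isMaxOn_utility hS
      (strictConcaveOn_regAtZero hconc hmono.monotoneOn) (strictMonoOn_regAtZero hmono) hq hmax hk)
      (hq'.1 k)
  have hterm : ∀ k, f (q' k) - f (q k) ≤ regAtZero f (q' k) - regAtZero f (q k) := by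
    intro k
    rcases (hq.1 k).eq_or_lt with hk | hk
    · rw [← hk, hzero k hk.symm, sub_self, sub_self]
    · rw [regAtZero_of_pos hk]
      linarith [le_regAtZero hmono.monotoneOn (hq'.1 k)]
  have hsum := sum_le_sum fun k (_ : k ∈ univ) => hterm k
  simp only [sum_sub_distrib] at hsum
  have hle := isMaxOn_iff.1 hmax q' hq'
  simp only [utility] at hle ⊢
  linarith

end Waterfilling

open Waterfilling in
theorem stmt_6_general (N : ℕ)
    (S : Fin N → ℝ) (hS : ∀ i, 0 ≤ S i)
    (f : ℝ → ℝ)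
    (hconc : StrictConcaveOn ℝ (Set.Ici 0) f)
    (hmono : StrictMonoOn f (Set.Ici 0))
    (Opt : (Fin N → ℝ) → Prop)
    (hOpt : ∀ q, Opt q ↔
      ((∀ i, 0 ≤ q i) ∧
        (∀ j : Fin N, ∑ i ∈ Iic j, q i ≤ ∑ i ∈ Iic j, S i)) ∧
      (∀ q' : Fin N → ℝ,
        ((∀ i, 0 ≤ q' i) ∧
          (∀ j : Fin N, ∑ i ∈ Iic j, q' i ≤ ∑ i ∈ Iic j, S i)) →
        ∑ i, f (q' i) ≤ ∑ i, f (q i))) :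
    (∃! q, Opt q) ∧ (∀ q, Opt q → Monotone q) := by
  have hOpt' : ∀ q, Opt q ↔ q ∈ causalSet S ∧ IsMaxOn (utility f) (causalSet S) q := fun q =>
    (hOpt q).trans (and_congr Iff.rfl isMaxOn_iff.symm)
  obtain ⟨q₀, hq₀, hmax₀⟩ := exists_isMaxOn_utility hS
    (continuousOn_regAtZero hconc.concaveOn hmono.monotoneOn)
  have hopt₀ := isMaxOn_utility_of_regAtZero hS hconc hmono hq₀ hmax₀
  refine ⟨⟨q₀, (hOpt' q₀).2 ⟨hq₀, hopt₀⟩, fun q hq => ?_⟩, fun q hq => ?_⟩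
  · obtain ⟨hq, hmax⟩ := (hOpt' q).1 hq
    exact eq_of_isMaxOn_utility hconc hq hq₀ hmax hopt₀
  · obtain ⟨hq, hmax⟩ := (hOpt' q).1 hq
    exact monotone_of_isMaxOn_utility hconc hq hmax

/-- Forward waterfilling: the problem of maximizing `∑ f (q i)` under
cumulative causality has a unique optimal solution, and it is nondecreasing. -/
theorem stmt_6 (N : ℕ) (hN : 0 < N)
    (S : Fin N → ℝ) (hS : ∀ i, 0 ≤ S i)
    (f : ℝ → ℝ)
    (hconc : StrictConcaveOn ℝ (Set.Ici 0) f)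
    (hmono : StrictMonoOn f (Set.Ici 0))
    (Opt : (Fin N → ℝ) → Prop)
    (hOpt : ∀ q, Opt q ↔
      ((∀ i, 0 ≤ q i) ∧
        (∀ j : Fin N, ∑ i ∈ Iic j, q i ≤ ∑ i ∈ Iic j, S i)) ∧
      (∀ q' : Fin N → ℝ,
        ((∀ i, 0 ≤ q' i) ∧
          (∀ j : Fin N, ∑ i ∈ Iic j, q' i ≤ ∑ i ∈ Iic j, S i)) →
        ∑ i, f (q' i) ≤ ∑ i, f (q i))) :
    (∃! q, Opt q) ∧ (∀ q, Opt q → Monotone q) :=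
  stmt_6_general N S hS f hconc hmono Opt hOpt
end

section
/- Consider maximizing ∑_{i=1}^N f(q_i) subject to ∑_{i=1}^j q_i ≤ ∑_{i=1}^j S_i for all j (with f strictly concave increasing, S_i ≥ 0), and let q̂ be the unique optimal solution. For the constrained problem that additionally requires q_i ≥ Ē_i for all i (with Ē_i ≤ S_i): if q̂_k < Ē_k for some k, then every optimal solution q* of the constrained problem satisfies q*_k = Ē_k. -/
/-!
At an optimum of `∑ f (q i)` under lower bounds `L ≤ q` and prefix constraints, shifting a little
mass from slot `a` to slot `b` cannot help; by strict concavity this gives `q a ≤ q b` as soon as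
`L a < q a` and the shift is feasible, i.e. every prefix constraint ending in `[b, a)` is slack.
By strict monotonicity, some prefix constraint ending at or after any given slot is tight.

Suppose `q* k > Ē k`. Let `t ≤ k` be the last cut (the prefix of the first `t` slots) at which `q*`
is tight, and `u > k` the first cut at which `q̂` is tight. For `t ≤ i < u` the exchange argument
gives `q̂ i ≤ q̂ k < Ē k < q* k ≤ q* i`, so `∑ q̂ < ∑ q*` over this block; but tightness of `q*` at
`t` and of `q̂` at `u` gives the reverse inequality.
-/

open Finset Filter Topology

theorem StrictConcaveOn.add_lt_map_sub_add_map_add {s : Set ℝ} {f : ℝ → ℝ}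
    (hf : StrictConcaveOn ℝ s f) {a b ε : ℝ} (ha : a ∈ s) (hb : b ∈ s) (hε : 0 < ε)
    (hεab : ε < a - b) : f a + f b < f (a - ε) + f (b + ε) := by
  have hab : 0 < a - b := hε.trans hεab
  set θ := ε / (a - b)
  have hθ : 0 < θ := div_pos hε hab
  have hθ' : 0 < 1 - θ := by rw [sub_pos, div_lt_one hab]; exact hεab
  have h₁ := hf.2 hb ha (by linarith) hθ' hθ (by ring)
  have h₂ := hf.2 hb ha (by linarith) hθ hθ' (by ring)
  have e₁ : (1 - θ) • b + θ • a = b + ε := by simp only [θ, smul_eq_mul]; field_simp; ring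
  have e₂ : θ • b + (1 - θ) • a = a - ε := by simp only [θ, smul_eq_mul]; field_simp; ring
  rw [e₁] at h₁
  rw [e₂] at h₂
  simp only [smul_eq_mul] at h₁ h₂
  linarith

namespace Waterfilling

variable {ι : Type*} [Fintype ι] [LinearOrder ι] [LocallyFiniteOrderBot ι]

def IsFeasible (L S q : ι → ℝ) : Prop :=
  (∀ i, L i ≤ q i) ∧ ∀ j, ∑ i ∈ Iic j, q i ≤ ∑ i ∈ Iic j, S i

def IsOptimal (f : ℝ → ℝ) (L S q : ι → ℝ) : Prop :=
  IsFeasible L S q ∧ ∀ q', IsFeasible L S q' → ∑ i, f (q' i) ≤ ∑ i, f (q i)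

theorem IsFeasible.eventually_add_smul {L S q v : ι → ℝ} (hq : IsFeasible L S q)
    (hL : ∀ i, L i < q i ∨ 0 ≤ v i)
    (hS : ∀ j, ∑ i ∈ Iic j, q i < ∑ i ∈ Iic j, S i ∨ ∑ i ∈ Iic j, v i ≤ 0) :
    ∀ᶠ ε in 𝓝[>] (0 : ℝ), IsFeasible L S (q + ε • v) := by
  have hlim : ∀ x y : ℝ, Tendsto (fun ε : ℝ => x + ε * y) (𝓝[>] 0) (𝓝 x) := fun x y =>
    ((by fun_prop : Continuous fun ε : ℝ => x + ε * y).tendsto' 0 x (by simp)).mono_left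
      nhdsWithin_le_nhds
  have hpos : ∀ᶠ ε in 𝓝[>] (0 : ℝ), 0 < ε := self_mem_nhdsWithin
  have hsum : ∀ (ε : ℝ) j, ∑ i ∈ Iic j, (q + ε • v) i
      = ∑ i ∈ Iic j, q i + ε * ∑ i ∈ Iic j, v i := fun ε j => by
    simp only [Pi.add_apply, Pi.smul_apply, smul_eq_mul, sum_add_distrib, mul_sum]
  refine (eventually_all.2 fun i => ?_).and (eventually_all.2 fun j => ?_)
  · simp only [Pi.add_apply, Pi.smul_apply, smul_eq_mul]
    rcases hL i with h | h
    · exact ((hlim (q i) (v i)).eventually_const_lt h).mono fun _ => le_of_lt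
    · filter_upwards [hpos] with ε hε
      nlinarith [hq.1 i]
  · simp only [hsum]
    rcases hS j with h | h
    · exact ((hlim _ _).eventually_lt_const h).mono fun _ => le_of_lt
    · filter_upwards [hpos] with ε hε
      nlinarith [hq.2 j]

variable {f : ℝ → ℝ} {L S q : ι → ℝ}

theorem IsOptimal.le_of_slack (hconc : StrictConcaveOn ℝ (Set.Ici 0) f)
    (hq : IsOptimal f L S q) (hL : ∀ i, 0 ≤ L i) {a b : ι} (ha : L a < q a)
    (hslack : ∀ j, b ≤ j → j < a → ∑ i ∈ Iic j, q i < ∑ i ∈ Iic j, S i) : q a ≤ q b := by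
  by_contra! hba
  have hab : a ≠ b := fun h => hba.ne' (congrArg q h)
  set v : ι → ℝ := Pi.single b 1 - Pi.single a 1
  have hv : ∀ s : Finset ι,
      ∑ i ∈ s, v i = (if b ∈ s then 1 else 0) - (if a ∈ s then 1 else 0) := fun s => by
    simp only [v, Pi.sub_apply, sum_sub_distrib, sum_pi_single']
  have hfeas : ∀ᶠ ε in 𝓝[>] (0 : ℝ), IsFeasible L S (q + ε • v) := by
    refine hq.1.eventually_add_smul (fun i => ?_) (fun j => ?_)
    · by_cases hi : i = a
      · exact Or.inl (hi ▸ ha)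
      · right
        simp only [v, Pi.sub_apply, Pi.single_apply, hi, if_false, sub_zero]
        split_ifs <;> norm_num
    · simp only [hv, mem_Iic]
      by_cases haj : a ≤ j
      · right; split_ifs <;> norm_num
      · by_cases hbj : b ≤ j
        · exact Or.inl (hslack j hbj (not_le.1 haj))
        · right; simp [haj, hbj]
  obtain ⟨ε, hε_feas, hε_pos, hε_lt⟩ :=
    (hfeas.and (Ioo_mem_nhdsGT (sub_pos.2 hba))).exists
  have hqb : 0 ≤ q b := (hL b).trans (hq.1.1 b)
  have hgain := hconc.add_lt_map_sub_add_map_add (hqb.trans hba.le) hqb hε_pos hε_lt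
  have hobj : ∑ i, f ((q + ε • v) i) - ∑ i, f (q i)
      = (f (q a - ε) - f (q a)) + (f (q b + ε) - f (q b)) := by
    rw [← sum_sub_distrib, Fintype.sum_eq_add a b hab]
    · simp [v, hab, hab.symm, sub_eq_add_neg]
    · rintro i ⟨hia, hib⟩
      simp [v, hia, hib]
  linarith [hq.2 _ hε_feas]

theorem IsOptimal.exists_tight (hmono : StrictMonoOn f (Set.Ici 0)) (hq : IsOptimal f L S q)
    (hL : ∀ i, 0 ≤ L i) (a : ι) :
    ∃ j, a ≤ j ∧ ∑ i ∈ Iic j, q i = ∑ i ∈ Iic j, S i := by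
  by_contra! hslack
  set v : ι → ℝ := Pi.single a 1
  have hfeas : ∀ᶠ ε in 𝓝[>] (0 : ℝ), IsFeasible L S (q + ε • v) := by
    refine hq.1.eventually_add_smul (fun i => Or.inr ?_) (fun j => ?_)
    · simp only [v, Pi.single_apply]
      split_ifs <;> norm_num
    · simp only [v, sum_pi_single', mem_Iic]
      by_cases haj : a ≤ j
      · exact Or.inl ((hq.1.2 j).lt_of_ne (hslack j haj))
      · right; simp [haj]
  obtain ⟨ε, hε_feas, hε_pos⟩ := (hfeas.and self_mem_nhdsWithin).exists
  have hqa : 0 ≤ q a := (hL a).trans (hq.1.1 a)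
  have hgain : f (q a) < f (q a + ε) :=
    hmono hqa (show 0 ≤ q a + ε by linarith) (by simpa using hε_pos)
  have hobj : ∑ i, f ((q + ε • v) i) - ∑ i, f (q i) = f (q a + ε) - f (q a) := by
    rw [← sum_sub_distrib, Fintype.sum_eq_single a]
    · simp [v]
    · intro i hi
      simp [v, hi]
  linarith [hq.2 _ hε_feas]

section Cuts

variable {N : ℕ}

/-- Cuts are indexed by `ℕ` so that the empty cut `m = 0`, at which every point is tight, exists. -/
def cutSum (q : Fin N → ℝ) (m : ℕ) : ℝ :=
  ∑ i ∈ univ.filter fun i : Fin N => (i : ℕ) < m, q i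

theorem cutSum_zero (q : Fin N → ℝ) : cutSum q 0 = 0 := by
  simp [cutSum]

theorem cutSum_succ (q : Fin N → ℝ) (j : Fin N) : cutSum q (j + 1) = ∑ i ∈ Iic j, q i := by
  refine sum_congr (Finset.ext fun i => ?_) fun _ _ => rfl
  simp only [mem_filter, mem_univ, true_and, mem_Iic, Fin.le_def]
  omega

theorem cutSum_sub_cutSum (q : Fin N → ℝ) {t u : ℕ} (htu : t ≤ u) :
    cutSum q u - cutSum q t =
      ∑ i ∈ univ.filter fun i : Fin N => t ≤ (i : ℕ) ∧ (i : ℕ) < u, q i := by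
  simp only [cutSum, sum_filter, ← sum_sub_distrib]
  refine sum_congr rfl fun i _ => ?_
  split_ifs <;> first | (exfalso; omega) | ring

variable {L S q : Fin N → ℝ}

theorem IsFeasible.cutSum_le (hq : IsFeasible L S q) {m : ℕ} (hm : m ≤ N) :
    cutSum q m ≤ cutSum S m := by
  rcases m with _ | m
  · simp [cutSum_zero]
  · exact (cutSum_succ q ⟨m, hm⟩).trans_le ((hq.2 _).trans_eq (cutSum_succ S _).symm)

theorem IsFeasible.exists_last_tight_cut (hq : IsFeasible L S q) {k : ℕ} (hk : k ≤ N) :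
    ∃ t ≤ k, cutSum q t = cutSum S t ∧ ∀ m, t < m → m ≤ k → cutSum q m < cutSum S m := by
  let P m := cutSum q m = cutSum S m
  have hP0 : P 0 := by simp only [P, cutSum_zero]
  exact ⟨Nat.findGreatest P k, Nat.findGreatest_le k, Nat.findGreatest_spec k.zero_le hP0,
    fun _ htm hmk =>
      (hq.cutSum_le (hmk.trans hk)).lt_of_ne (Nat.findGreatest_is_greatest htm hmk)⟩

theorem IsFeasible.exists_first_tight_cut (hq : IsFeasible L S q) (k : Fin N)
    (htight : ∃ j, k ≤ j ∧ ∑ i ∈ Iic j, q i = ∑ i ∈ Iic j, S i) :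
    ∃ u, (k : ℕ) < u ∧ u ≤ N ∧ cutSum q u = cutSum S u ∧
      ∀ m, (k : ℕ) < m → m < u → cutSum q m < cutSum S m := by
  have hex : ∃ m, (k : ℕ) < m ∧ m ≤ N ∧ cutSum q m = cutSum S m := by
    obtain ⟨j, hkj, hj⟩ := htight
    exact ⟨j + 1, Nat.lt_succ_of_le hkj, j.isLt, by rw [cutSum_succ, cutSum_succ, hj]⟩
  obtain ⟨hku, huN, hu⟩ := Nat.find_spec hex
  exact ⟨Nat.find hex, hku, huN, hu, fun m hkm hmu =>
    (hq.cutSum_le (hmu.le.trans huN)).lt_of_ne fun h =>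
      Nat.find_min hex hmu ⟨hkm, hmu.le.trans huN, h⟩⟩

end Cuts

end Waterfilling

open Waterfilling

theorem stmt_7_general (N : ℕ)
    (S Ebar : Fin N → ℝ)
    (hEbar : ∀ i, 0 ≤ Ebar i)
    (f : ℝ → ℝ)
    (hconc : StrictConcaveOn ℝ (Set.Ici 0) f)
    (hmono : StrictMonoOn f (Set.Ici 0))
    (qhat : Fin N → ℝ)
    (hqhat_feas : (∀ i, 0 ≤ qhat i) ∧
      (∀ j : Fin N, ∑ i ∈ Iic j, qhat i ≤ ∑ i ∈ Iic j, S i))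
    (hqhat_opt : ∀ q : Fin N → ℝ,
      ((∀ i, 0 ≤ q i) ∧
        (∀ j : Fin N, ∑ i ∈ Iic j, q i ≤ ∑ i ∈ Iic j, S i)) →
      ∑ i, f (q i) ≤ ∑ i, f (qhat i))
    (k : Fin N) (hk : qhat k < Ebar k) :
    ∀ q : Fin N → ℝ,
      ((∀ i, Ebar i ≤ q i) ∧
        (∀ j : Fin N, ∑ i ∈ Iic j, q i ≤ ∑ i ∈ Iic j, S i)) →
      (∀ q' : Fin N → ℝ,
        ((∀ i, Ebar i ≤ q' i) ∧
          (∀ j : Fin N, ∑ i ∈ Iic j, q' i ≤ ∑ i ∈ Iic j, S i)) →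
        ∑ i, f (q' i) ≤ ∑ i, f (q i)) →
      q k = Ebar k := by
  intro q hq_feas hq_opt
  have hq : IsOptimal f Ebar S q := ⟨hq_feas, hq_opt⟩
  have hqhat : IsOptimal f 0 S qhat := ⟨hqhat_feas, hqhat_opt⟩
  by_contra hne
  have hqk : Ebar k < q k := (hq_feas.1 k).lt_of_ne' hne
  obtain ⟨t, htk, ht, ht_slack⟩ := hq.1.exists_last_tight_cut k.isLt.le
  obtain ⟨u, hku, huN, hu, hu_slack⟩ :=
    hqhat.1.exists_first_tight_cut k (hqhat.exists_tight hmono (fun _ => le_rfl) k)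
  set B := univ.filter fun i : Fin N => t ≤ (i : ℕ) ∧ (i : ℕ) < u
  have hq_block : ∀ i ∈ B, q k ≤ q i := fun i hi =>
    hq.le_of_slack hconc hEbar hqk fun j hij hjk => by
      simp only [B, mem_filter, mem_univ, true_and] at hi
      rw [← cutSum_succ, ← cutSum_succ]
      exact ht_slack _ (by omega) (by omega)
  have hqhat_block : ∀ i ∈ B, qhat i ≤ qhat k := fun i hi => by
    rcases (hqhat_feas.1 i).eq_or_lt with h0 | hpos
    · exact h0 ▸ hqhat_feas.1 k
    refine hqhat.le_of_slack hconc (fun _ => le_rfl) hpos fun j hkj hji => ?_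
    simp only [B, mem_filter, mem_univ, true_and] at hi
    rw [← cutSum_succ, ← cutSum_succ]
    exact hu_slack _ (by omega) (by omega)
  have hkB : k ∈ B := by simp only [B, mem_filter, mem_univ, true_and]; omega
  have hsum_lt : ∑ i ∈ B, qhat i < ∑ i ∈ B, q i := sum_lt_sum_of_nonempty ⟨k, hkB⟩
    fun i hi => (hqhat_block i hi).trans_lt ((hk.trans hqk).trans_le (hq_block i hi))
  have htu : t ≤ u := by omega
  linarith [cutSum_sub_cutSum q htu, cutSum_sub_cutSum qhat htu, hq.1.cutSum_le huN,
    hqhat.1.cutSum_le (htk.trans k.isLt.le)]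

/-- Lemma 5: if the unconstrained waterfilling solution drops below `Ē k` at
slot `k`, then every optimal solution of the problem with the additional
minimum-consumption constraints uses exactly `Ē k` at slot `k`. -/
theorem stmt_7 (N : ℕ) (hN : 0 < N)
    (S Ebar : Fin N → ℝ) (hS : ∀ i, 0 ≤ S i)
    (hEbar : ∀ i, 0 ≤ Ebar i) (hES : ∀ i, Ebar i ≤ S i)
    (f : ℝ → ℝ)
    (hconc : StrictConcaveOn ℝ (Set.Ici 0) f)
    (hmono : StrictMonoOn f (Set.Ici 0))
    (qhat : Fin N → ℝ)
    (hqhat_feas : (∀ i, 0 ≤ qhat i) ∧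
      (∀ j : Fin N, ∑ i ∈ Iic j, qhat i ≤ ∑ i ∈ Iic j, S i))
    (hqhat_opt : ∀ q : Fin N → ℝ,
      ((∀ i, 0 ≤ q i) ∧
        (∀ j : Fin N, ∑ i ∈ Iic j, q i ≤ ∑ i ∈ Iic j, S i)) →
      ∑ i, f (q i) ≤ ∑ i, f (qhat i))
    (k : Fin N) (hk : qhat k < Ebar k) :
    ∀ q : Fin N → ℝ,
      ((∀ i, Ebar i ≤ q i) ∧
        (∀ j : Fin N, ∑ i ∈ Iic j, q i ≤ ∑ i ∈ Iic j, S i)) →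
      (∀ q' : Fin N → ℝ,
        ((∀ i, Ebar i ≤ q' i) ∧
          (∀ j : Fin N, ∑ i ∈ Iic j, q' i ≤ ∑ i ∈ Iic j, S i)) →
        ∑ i, f (q' i) ≤ ∑ i, f (q i)) →
      q k = Ebar k :=
  stmt_7_general N S Ebar hEbar f hconc hmono qhat hqhat_feas hqhat_opt k hk
end

section
/- For the single-constraint-set problem of maximizing ∑_{i=1}^N r_i subject to ∑_{i=1}^j g⁻¹(r_i) ≤ ∑_{i=1}^j E_i for all j (g⁻¹ strictly convex increasing, g⁻¹(0)=0), the optimal solution is given recursively by: i_0 = 0, and on each block (i_{n-1}, i_n] the rate is constant equal to g of the average remaining energy, where i_n = argmin_{i_{n-1} < i ≤ N} g((∑_{j=1}^{i} E_j - ∑_{j=1}^{i_{n-1}} g⁻¹(r*_j))/(i - i_{n-1})). Moreover the resulting rate sequence is nondecreasing. -/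
/-!
On each block the schedule spends exactly the energy harvested there, so the energy constraint is
tight at every block boundary, while the argmin choice of the next boundary keeps it satisfied
inside the block. Comparing the next boundary with the one after it shows that the block averages,
hence the rates, increase. Optimality is a Lagrangian argument: by concavity of `g`, any rates `r'`
satisfy `r'ᵢ ≤ rᵢ + μᵢ (g⁻¹ r'ᵢ - g⁻¹ rᵢ)` with `μᵢ = g'(g⁻¹ rᵢ) = exp (-2 rᵢ) / 2`. These weights
are nonnegative, nonincreasing, and drop only where the constraint is tight for `r`, so summation by
parts turns `∑ μᵢ (g⁻¹ r'ᵢ - g⁻¹ rᵢ)` into a nonnegative combination of the quantities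
`∑_{i<k} g⁻¹ r'ᵢ - ∑_{i<k} Eᵢ ≤ 0` at such `k`.
-/

open Finset

namespace EnergyHarvesting

noncomputable def rate (p : ℝ) : ℝ := Real.log (1 + p) / 2

noncomputable def power (x : ℝ) : ℝ := Real.exp (2 * x) - 1

theorem power_rate {p : ℝ} (hp : -1 < p) : power (rate p) = p := by
  rw [power, rate, mul_div_cancel₀ _ two_ne_zero, Real.exp_log (by linarith)]
  ring

theorem rate_le_rate_iff {p q : ℝ} (hp : -1 < p) (hq : -1 < q) : rate p ≤ rate q ↔ p ≤ q := by
  rw [rate, rate, div_le_div_iff_of_pos_right two_pos,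
    Real.log_le_log_iff (by linarith) (by linarith), add_le_add_iff_left]

/-- The tangent-line bound for the concave `rate` at `power y`, where its slope is
`exp (-2 y) / 2`. -/
theorem le_add_mul_power_sub (x y : ℝ) :
    x ≤ y + Real.exp (-2 * y) / 2 * (power x - power y) := by
  have h : Real.exp (-2 * y) * (power x - power y) = Real.exp (2 * (x - y)) - 1 := by
    have hinv : Real.exp (-2 * y) * Real.exp (2 * y) = 1 := by
      rw [← Real.exp_add, neg_mul, neg_add_cancel, Real.exp_zero]
    rw [power, power, show 2 * (x - y) = -2 * y + 2 * x by ring, Real.exp_add]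
    linear_combination -hinv
  have := Real.add_one_le_exp (2 * (x - y))
  linarith

noncomputable def blockAvg (E : ℕ → ℝ) (p q : ℕ) : ℝ :=
  ((∑ j ∈ range q, E j) - ∑ j ∈ range p, E j) / ((q : ℝ) - (p : ℝ))

theorem blockAvg_nonneg {E : ℕ → ℝ} (hE : ∀ i, 0 ≤ E i) {p q : ℕ} (hpq : p ≤ q) :
    0 ≤ blockAvg E p q := by
  rw [blockAvg, ← sum_Ico_eq_sub E hpq]
  exact div_nonneg (sum_nonneg fun i _ => hE i) (sub_nonneg.2 (by exact_mod_cast hpq))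

theorem neg_one_lt_blockAvg {E : ℕ → ℝ} (hE : ∀ i, 0 ≤ E i) {p q : ℕ} (hpq : p ≤ q) :
    -1 < blockAvg E p q :=
  (blockAvg_nonneg hE hpq).trans_lt' (by norm_num)

theorem mul_blockAvg (E : ℕ → ℝ) {p q : ℕ} (hpq : p < q) :
    ((q : ℝ) - p) * blockAvg E p q = (∑ j ∈ range q, E j) - ∑ j ∈ range p, E j :=
  mul_div_cancel₀ _ (sub_ne_zero.2 (by exact_mod_cast hpq.ne'))

/-- The average over `[p, s)` is a convex combination of those over `[p, q)` and `[q, s)`. -/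
theorem blockAvg_le_blockAvg_of_le (E : ℕ → ℝ) {p q s : ℕ} (hpq : p < q) (hqs : q < s)
    (h : blockAvg E p q ≤ blockAvg E p s) : blockAvg E p q ≤ blockAvg E q s := by
  have hpq' : (p : ℝ) < q := by exact_mod_cast hpq
  have hqs' : (q : ℝ) < s := by exact_mod_cast hqs
  have hps := mul_blockAvg E (hpq.trans hqs)
  have hpq_avg := mul_blockAvg E hpq
  have hqs_avg := mul_blockAvg E hqs
  have : ((s : ℝ) - q) * blockAvg E p q ≤ ((s : ℝ) - q) * blockAvg E q s := by
    linarith [mul_le_mul_of_nonneg_left h (by linarith : (0 : ℝ) ≤ s - p)]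
  exact le_of_mul_le_mul_left this (by linarith)

theorem sum_range_eq_add_of_eq_on_Ico (f : ℕ → ℝ) {c : ℝ} {p q : ℕ} (hpq : p ≤ q)
    (h : ∀ i, p ≤ i → i < q → f i = c) :
    ∑ i ∈ range q, f i = ∑ i ∈ range p, f i + ((q : ℝ) - p) * c := by
  rw [← sum_range_add_sum_Ico f hpq,
    sum_congr rfl fun i hi => h i (mem_Ico.1 hi).1 (mem_Ico.1 hi).2, sum_const, Nat.card_Ico,
    nsmul_eq_mul, Nat.cast_sub hpq]

theorem exists_le_and_lt_succ {idx : ℕ → ℕ} {i : ℕ} :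
    ∀ {M : ℕ}, idx 0 ≤ i → i < idx M → ∃ n < M, idx n ≤ i ∧ i < idx (n + 1)
  | 0, h0, hM => absurd hM (not_lt.2 h0)
  | M + 1, h0, hM => by
    by_cases h : idx M ≤ i
    · exact ⟨M, M.lt_succ_self, h, hM⟩
    · obtain ⟨n, hn, hni⟩ := exists_le_and_lt_succ h0 (not_le.1 h)
      exact ⟨n, hn.trans M.lt_succ_self, hni⟩

theorem sum_mul_nonpos_of_antitone {μ x : ℕ → ℝ} {N : ℕ}
    (hμ : ∀ i, i + 1 < N → μ (i + 1) ≤ μ i) (hμ0 : ∀ i < N, 0 ≤ μ i)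
    (hx : ∀ k, k + 1 < N → μ (k + 1) < μ k → ∑ i ∈ range (k + 1), x i ≤ 0)
    (hxN : ∑ i ∈ range N, x i ≤ 0) : ∑ i ∈ range N, μ i * x i ≤ 0 := by
  obtain _ | N := N
  · simp
  have := sum_range_by_parts μ x (N + 1)
  simp only [smul_eq_mul, add_tsub_cancel_right] at this
  rw [this, sub_nonpos]
  refine (mul_nonpos_of_nonneg_of_nonpos (hμ0 N N.lt_succ_self) hxN).trans
    (sum_nonneg fun i hi => ?_)
  have hi : i + 1 < N + 1 := by simpa using hi
  rcases (hμ i hi).lt_or_eq with h | h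
  · exact mul_nonneg_of_nonpos_of_nonpos (by linarith) (hx i hi h)
  · simp [h]

theorem sum_le_sum_of_tight {E r r' : ℕ → ℝ} {N : ℕ}
    (hr : ∀ k, k + 1 < N → r k ≤ r (k + 1))
    (htight : ∀ k, k + 1 < N → r k < r (k + 1) →
      ∑ i ∈ range (k + 1), power (r i) = ∑ i ∈ range (k + 1), E i)
    (htightN : ∑ i ∈ range N, power (r i) = ∑ i ∈ range N, E i)
    (hr' : ∀ j < N, ∑ i ∈ range (j + 1), power (r' i) ≤ ∑ i ∈ range (j + 1), E i) :
    ∑ i ∈ range N, r' i ≤ ∑ i ∈ range N, r i := by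
  set μ : ℕ → ℝ := fun i => Real.exp (-2 * r i) / 2
  have hμ : ∀ i j, r i ≤ r j → μ j ≤ μ i := fun i j h => by
    have := Real.exp_le_exp.2 (show -2 * r j ≤ -2 * r i by linarith)
    simp only [μ]
    linarith
  have hslack : ∑ i ∈ range N, μ i * (power (r' i) - power (r i)) ≤ 0 := by
    refine sum_mul_nonpos_of_antitone (fun i hi => hμ _ _ (hr i hi)) (fun i _ => by positivity)
      (fun k hk hlt => ?_) ?_
    · have hrk : r k < r (k + 1) := lt_of_not_ge fun h => hlt.not_ge (hμ _ _ h)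
      rw [sum_sub_distrib, htight k hk hrk]
      linarith [hr' k (by omega)]
    · obtain _ | N := N
      · simp
      rw [sum_sub_distrib, htightN]
      linarith [hr' N N.lt_succ_self]
  have := sum_le_sum fun i (_ : i ∈ range N) => le_add_mul_power_sub (r' i) (r i)
  rw [sum_add_distrib] at this
  linarith

section Schedule

variable {E r : ℕ → ℝ} {idx : ℕ → ℕ} {M : ℕ}

theorem sum_power_eq_sum_at_boundary (hE : ∀ i, 0 ≤ E i) (hidx0 : idx 0 = 0)
    (hidx : ∀ n < M, idx n < idx (n + 1))
    (hblock : ∀ n < M, ∀ i, idx n ≤ i → i < idx (n + 1) →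
      r i = rate (((∑ j ∈ range (idx (n + 1)), E j) - ∑ j ∈ range (idx n), power (r j)) /
        ((idx (n + 1) : ℝ) - (idx n : ℝ)))) :
    ∀ n ≤ M, ∑ j ∈ range (idx n), power (r j) = ∑ j ∈ range (idx n), E j
  | 0, _ => by simp [hidx0]
  | n + 1, hn => by
    have ih := sum_power_eq_sum_at_boundary hE hidx0 hidx hblock n (by omega)
    have hlt := hidx n (by omega)
    have hpow : ∀ i, idx n ≤ i → i < idx (n + 1) →
        power (r i) = blockAvg E (idx n) (idx (n + 1)) := by
      intro i h1 h2
      rw [hblock n (by omega) i h1 h2, ih]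
      exact power_rate (neg_one_lt_blockAvg hE hlt.le)
    rw [sum_range_eq_add_of_eq_on_Ico _ hlt.le hpow, ih, mul_blockAvg E hlt]
    ring

theorem sum_power_le_sum_energy (hE : ∀ i, 0 ≤ E i) (hidx0 : idx 0 = 0)
    (hT : ∀ n ≤ M, ∑ j ∈ range (idx n), power (r j) = ∑ j ∈ range (idx n), E j)
    (hrate : ∀ n < M, ∀ i, idx n ≤ i → i < idx (n + 1) →
      r i = rate (blockAvg E (idx n) (idx (n + 1))))
    (hmin : ∀ n < M, ∀ k, idx n < k → k ≤ idx M →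
      blockAvg E (idx n) (idx (n + 1)) ≤ blockAvg E (idx n) k)
    {j : ℕ} (hj : j < idx M) :
    ∑ i ∈ range (j + 1), power (r i) ≤ ∑ i ∈ range (j + 1), E i := by
  obtain ⟨n, hn, h1, h2⟩ := exists_le_and_lt_succ (by omega) hj
  have hpow : ∀ i, idx n ≤ i → i < j + 1 → power (r i) = blockAvg E (idx n) (idx (n + 1)) := by
    intro i hi1 hi2
    rw [hrate n hn i hi1 (by omega)]
    exact power_rate (neg_one_lt_blockAvg hE (by omega))
  have hlen : (0 : ℝ) ≤ ((j + 1 : ℕ) : ℝ) - idx n :=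
    sub_nonneg.2 (by exact_mod_cast (by omega : idx n ≤ j + 1))
  have := mul_le_mul_of_nonneg_left (hmin n hn (j + 1) (by omega) (by omega)) hlen
  rw [mul_blockAvg E (by omega : idx n < j + 1)] at this
  rw [sum_range_eq_add_of_eq_on_Ico _ (by omega) hpow, hT n hn.le]
  linarith

theorem blockAvg_le_blockAvg_succ (hidx : ∀ n < M, idx n < idx (n + 1))
    (hmin : ∀ n < M, ∀ k, idx n < k → k ≤ idx M →
      blockAvg E (idx n) (idx (n + 1)) ≤ blockAvg E (idx n) k)
    {n : ℕ} (hn : n + 1 < M) :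
    blockAvg E (idx n) (idx (n + 1)) ≤ blockAvg E (idx (n + 1)) (idx (n + 2)) := by
  have h01 := hidx n (by omega)
  have h12 := hidx (n + 1) hn
  have h2M : idx (n + 2) ≤ idx M :=
    (strictMonoOn_Iic_of_lt_succ hidx).monotoneOn hn (Set.mem_Iic.2 le_rfl) hn
  exact blockAvg_le_blockAvg_of_le E h01 h12 (hmin n (by omega) _ (h01.trans h12) h2M)

theorem rate_succ_eq_or_boundary (hidx0 : idx 0 = 0) (hidx : ∀ n < M, idx n < idx (n + 1))
    (hrate : ∀ n < M, ∀ i, idx n ≤ i → i < idx (n + 1) →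
      r i = rate (blockAvg E (idx n) (idx (n + 1))))
    {k : ℕ} (hk : k + 1 < idx M) :
    r k = r (k + 1) ∨ ∃ n, n + 1 < M ∧ idx (n + 1) = k + 1 ∧
      r k = rate (blockAvg E (idx n) (idx (n + 1))) ∧
      r (k + 1) = rate (blockAvg E (idx (n + 1)) (idx (n + 2))) := by
  obtain ⟨n, hn, h1, h2⟩ := exists_le_and_lt_succ (by omega) hk
  rcases h1.lt_or_eq with h1 | h1
  · left
    rw [hrate n hn k (by omega) (by omega), hrate n hn (k + 1) h1.le h2]
  · obtain _ | m := n
    · omega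
    have := hidx m (by omega)
    exact .inr ⟨m, hn, h1, hrate m (by omega) k (by omega) (by omega),
      hrate (m + 1) hn (k + 1) h1.le h2⟩

theorem rate_le_rate_succ (hE : ∀ i, 0 ≤ E i) (hidx0 : idx 0 = 0)
    (hidx : ∀ n < M, idx n < idx (n + 1))
    (hrate : ∀ n < M, ∀ i, idx n ≤ i → i < idx (n + 1) →
      r i = rate (blockAvg E (idx n) (idx (n + 1))))
    (hmin : ∀ n < M, ∀ k, idx n < k → k ≤ idx M →
      blockAvg E (idx n) (idx (n + 1)) ≤ blockAvg E (idx n) k)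
    {k : ℕ} (hk : k + 1 < idx M) : r k ≤ r (k + 1) := by
  rcases rate_succ_eq_or_boundary hidx0 hidx hrate hk with h | ⟨n, hn, -, hk0, hk1⟩
  · exact h.le
  rw [hk0, hk1, rate_le_rate_iff (neg_one_lt_blockAvg hE (hidx n (by omega)).le)
    (neg_one_lt_blockAvg hE (hidx _ hn).le)]
  exact blockAvg_le_blockAvg_succ hidx hmin hn

theorem sum_power_eq_of_rate_lt_rate_succ (hidx0 : idx 0 = 0)
    (hidx : ∀ n < M, idx n < idx (n + 1))
    (hT : ∀ n ≤ M, ∑ j ∈ range (idx n), power (r j) = ∑ j ∈ range (idx n), E j)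
    (hrate : ∀ n < M, ∀ i, idx n ≤ i → i < idx (n + 1) →
      r i = rate (blockAvg E (idx n) (idx (n + 1))))
    {k : ℕ} (hk : k + 1 < idx M) (hlt : r k < r (k + 1)) :
    ∑ i ∈ range (k + 1), power (r i) = ∑ i ∈ range (k + 1), E i := by
  rcases rate_succ_eq_or_boundary hidx0 hidx hrate hk with h | ⟨n, hn, hbd, -⟩
  · exact absurd h hlt.ne
  · exact hbd ▸ hT (n + 1) hn.le

end Schedule

end EnergyHarvesting

open EnergyHarvesting

theorem stmt_13_general (N : ℕ)
    (E : ℕ → ℝ) (hE : ∀ i, 0 ≤ E i)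
    (g ginv : ℝ → ℝ)
    (hg : ∀ p, g p = Real.log (1 + p) / 2)
    (hginv : ∀ x, ginv x = Real.exp (2 * x) - 1)
    (r : ℕ → ℝ)
    (M : ℕ) (idx : ℕ → ℕ)
    (hidx0 : idx 0 = 0) (hidxM : idx M = N)
    (hidx_mono : ∀ n < M, idx n < idx (n + 1))
    (hblock : ∀ n < M, ∀ i, idx n ≤ i → i < idx (n + 1) →
      r i = g (((∑ j ∈ range (idx (n + 1)), E j) -
              ∑ j ∈ range (idx n), ginv (r j)) /
            ((idx (n + 1) : ℝ) - (idx n : ℝ))))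
    (hargmin : ∀ n < M, ∀ i, idx n < i → i ≤ N →
      g (((∑ j ∈ range (idx (n + 1)), E j) -
            ∑ j ∈ range (idx n), ginv (r j)) /
          ((idx (n + 1) : ℝ) - (idx n : ℝ))) ≤
      g (((∑ j ∈ range i, E j) -
            ∑ j ∈ range (idx n), ginv (r j)) /
          ((i : ℝ) - (idx n : ℝ)))) :
    (∀ j < N, ∑ i ∈ range (j + 1), ginv (r i) ≤ ∑ i ∈ range (j + 1), E i) ∧
    (∀ r' : ℕ → ℝ,
      ((∀ i, 0 ≤ r' i) ∧
        (∀ j < N, ∑ i ∈ range (j + 1), ginv (r' i) ≤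
          ∑ i ∈ range (j + 1), E i)) →
      ∑ i ∈ range N, r' i ≤ ∑ i ∈ range N, r i) ∧
    (∀ i j, i ≤ j → j < N → r i ≤ r j) := by
  subst hidxM
  obtain rfl : g = rate := funext hg
  obtain rfl : ginv = power := funext hginv
  have hT := sum_power_eq_sum_at_boundary hE hidx0 hidx_mono hblock
  have hrate : ∀ n < M, ∀ i, idx n ≤ i → i < idx (n + 1) →
      r i = rate (blockAvg E (idx n) (idx (n + 1))) := fun n hn i h1 h2 => by
    rw [hblock n hn i h1 h2, hT n hn.le]
    rfl
  have hmin : ∀ n < M, ∀ k, idx n < k → k ≤ idx M →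
      blockAvg E (idx n) (idx (n + 1)) ≤ blockAvg E (idx n) k := fun n hn k h1 h2 => by
    have := hargmin n hn k h1 h2
    rw [hT n hn.le] at this
    exact (rate_le_rate_iff (neg_one_lt_blockAvg hE (hidx_mono n hn).le)
      (neg_one_lt_blockAvg hE h1.le)).1 this
  have hstep : ∀ k, k + 1 < idx M → r k ≤ r (k + 1) := fun k hk =>
    rate_le_rate_succ hE hidx0 hidx_mono hrate hmin hk
  refine ⟨fun j hj => sum_power_le_sum_energy hE hidx0 hT hrate hmin hj,
    fun r' ⟨_, hr'⟩ => sum_le_sum_of_tight hstep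
      (fun k hk => sum_power_eq_of_rate_lt_rate_succ hidx0 hidx_mono hT hrate hk) (hT M le_rfl) hr',
    fun i j hij hj => ?_⟩
  exact monotoneOn_of_le_succ Set.ordConnected_Iio (fun k _ _ hk => hstep k hk)
    (hij.trans_lt hj) hj hij

/-- Single-constraint specialization of Theorem 1: the block-constant policy
(constant rate equal to `g` of the minimal average remaining energy on each
block) is optimal for the transmitter-only problem, and it is nondecreasing. -/
theorem stmt_13 (N : ℕ) (hN : 0 < N)
    (E : ℕ → ℝ) (hE : ∀ i, 0 ≤ E i)
    (g ginv : ℝ → ℝ)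
    (hg : ∀ p, g p = Real.log (1 + p) / 2)
    (hginv : ∀ x, ginv x = Real.exp (2 * x) - 1)
    (r : ℕ → ℝ) (hr : ∀ i, 0 ≤ r i)
    (M : ℕ) (idx : ℕ → ℕ)
    (hidx0 : idx 0 = 0) (hidxM : idx M = N)
    (hidx_mono : ∀ n < M, idx n < idx (n + 1))
    (hblock : ∀ n < M, ∀ i, idx n ≤ i → i < idx (n + 1) →
      r i = g (((∑ j ∈ range (idx (n + 1)), E j) -
              ∑ j ∈ range (idx n), ginv (r j)) /
            ((idx (n + 1) : ℝ) - (idx n : ℝ))))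
    (hargmin : ∀ n < M, ∀ i, idx n < i → i ≤ N →
      g (((∑ j ∈ range (idx (n + 1)), E j) -
            ∑ j ∈ range (idx n), ginv (r j)) /
          ((idx (n + 1) : ℝ) - (idx n : ℝ))) ≤
      g (((∑ j ∈ range i, E j) -
            ∑ j ∈ range (idx n), ginv (r j)) /
          ((i : ℝ) - (idx n : ℝ)))) :
    (∀ j < N, ∑ i ∈ range (j + 1), ginv (r i) ≤ ∑ i ∈ range (j + 1), E i) ∧
    (∀ r' : ℕ → ℝ,
      ((∀ i, 0 ≤ r' i) ∧
        (∀ j < N, ∑ i ∈ range (j + 1), ginv (r' i) ≤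
          ∑ i ∈ range (j + 1), E i)) →
      ∑ i ∈ range N, r' i ≤ ∑ i ∈ range N, r i) ∧
    (∀ i j, i ≤ j → j < N → r i ≤ r j) :=
  stmt_13_general N E hE g ginv hg hginv r M idx hidx0 hidxM hidx_mono hblock hargmin
end

section
/- Feasibility of the Theorem-1 policy: the rates defined by r*_n = min{ g((∑_{j=1}^{i_n} E_j - ∑_{j=1}^{i_{n-1}} g⁻¹(r*_j))/(i_n - i_{n-1})), φ⁻¹((∑_{j=1}^{i_n}(Ē_j + α H_j) - ∑_{j=1}^{i_{n-1}} φ(r*_j))/(i_n - i_{n-1})) }, assigned constantly on each block (i_{n-1}, i_n] with i_n the argmin of the same expression over i_{n-1} < i ≤ N, satisfy both cumulative constraints ∑_{i=1}^j g⁻¹(r*_i) ≤ ∑_{i=1}^j E_i and ∑_{i=1}^j φ(r*_i) ≤ ∑_{i=1}^j (Ē_i + α H_i) for every j ≤ N. -/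
/-!
Both constraints say that the cumulative cost `∑ c (r k)` (with `c = g⁻¹` or `c = φ`) stays below
a cumulative budget `∑ e k` with `e ≥ 0`. Argue along the blocks: if the constraint holds at the
start `a` of a block, the leftover budget `∑_{k<i} e k - ∑_{k<a} c (r k)` is nonnegative for every
`i > a`. By the argmin property the block rate is at most the candidate rate computed from `i`,
and since `c` undoes `g` resp. `φ⁻¹` on nonnegative arguments, the block up to `i` spends at most
the leftover budget.
-/

open Finset

lemma exists_block_of_lt {M N j : ℕ} {idx : ℕ → ℕ} (hidx0 : idx 0 = 0) (hidxM : idx M = N)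
    (hj : j < N) : ∃ n < M, idx n ≤ j ∧ j < idx (n + 1) := by
  set n := Nat.findGreatest (fun n => idx n ≤ j) M
  have hn : idx n ≤ j :=
    Nat.findGreatest_spec (P := fun k => idx k ≤ j) (Nat.zero_le M) (by rw [hidx0]; omega)
  have hnM : n < M := by
    refine lt_of_le_of_ne (Nat.findGreatest_le M) fun h => ?_
    rw [h, hidxM] at hn
    omega
  exact ⟨n, hnM, hn, not_le.mp <|
    Nat.findGreatest_is_greatest (P := fun k => idx k ≤ j) n.lt_succ_self hnM⟩

lemma forall_le_of_block_step {P : ℕ → Prop} {M N : ℕ} {idx : ℕ → ℕ}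
    (hidx0 : idx 0 = 0) (hidxM : idx M = N) (h0 : P 0)
    (hstep : ∀ n < M, ∀ j, idx n ≤ j → j < idx (n + 1) → j < N → P (idx n) → P (j + 1)) :
    ∀ i ≤ N, P i := by
  intro i
  induction i using Nat.strong_induction_on with
  | _ i IH =>
  intro hi
  rcases i with _ | j
  · exact h0
  obtain ⟨n, hnM, hnj, hjn⟩ := exists_block_of_lt hidx0 hidxM (j.lt_of_succ_le hi)
  exact hstep n hnM j hnj hjn (by omega) (IH _ (by omega) (by omega))

lemma sum_range_comp_le_of_block (c h : ℝ → ℝ) (e r : ℕ → ℝ) (he : ∀ i, 0 ≤ e i)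
    (hch : ∀ ρ y, 0 ≤ ρ → 0 ≤ y → ρ ≤ h y → c ρ ≤ y) {a i : ℕ} (hai : a < i) {ρ : ℝ}
    (hρ : 0 ≤ ρ) (hconst : ∀ k ∈ Ico a i, r k = ρ)
    (hprefix : ∑ k ∈ range a, c (r k) ≤ ∑ k ∈ range a, e k)
    (hle : ρ ≤ h (((∑ k ∈ range i, e k) - ∑ k ∈ range a, c (r k)) / ((i : ℝ) - (a : ℝ)))) :
    ∑ k ∈ range i, c (r k) ≤ ∑ k ∈ range i, e k := by
  have hlen : (0 : ℝ) < (i : ℝ) - (a : ℝ) := sub_pos.mpr (by exact_mod_cast hai)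
  have hbudget : ∑ k ∈ range a, e k ≤ ∑ k ∈ range i, e k :=
    sum_le_sum_of_subset_of_nonneg (range_subset_range.mpr hai.le) fun k _ _ => he k
  have hcost := hch _ _ hρ (div_nonneg (by linarith) hlen.le) hle
  have hsplit : ∑ k ∈ range i, c (r k) = ∑ k ∈ range a, c (r k) + ((i : ℝ) - a) * c ρ := by
    rw [← sum_range_add_sum_Ico _ hai.le, sum_congr rfl fun k hk => congrArg c (hconst k hk),
      sum_const, Nat.card_Ico, nsmul_eq_mul, Nat.cast_sub hai.le]
  rw [le_div_iff₀ hlen] at hcost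
  linarith

lemma exp_two_mul_sub_one_le {ρ y : ℝ} (hy : -1 < y) (hρ : ρ ≤ Real.log (1 + y) / 2) :
    Real.exp (2 * ρ) - 1 ≤ y := by
  have := Real.exp_le_exp.mpr (show 2 * ρ ≤ Real.log (1 + y) by linarith)
  rw [Real.exp_log (by linarith)] at this
  linarith

theorem stmt_14_general (N : ℕ)
    (E Ebar H : ℕ → ℝ)
    (hE : ∀ i, 0 ≤ E i) (hEbar : ∀ i, 0 ≤ Ebar i) (hH : ∀ i, 0 ≤ H i)
    (α : ℝ) (hα0 : 0 ≤ α)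
    (g ginv : ℝ → ℝ)
    (hg : ∀ p, g p = Real.log (1 + p) / 2)
    (hginv : ∀ x, ginv x = Real.exp (2 * x) - 1)
    (φ φinv : ℝ → ℝ)
    (hφmono : StrictMonoOn φ (Set.Ici 0))
    (hφinv' : ∀ y, 0 ≤ y → φ (φinv y) = y)
    (r : ℕ → ℝ) (hr : ∀ i, 0 ≤ r i)
    (M : ℕ) (idx : ℕ → ℕ)
    (hidx0 : idx 0 = 0) (hidxM : idx M = N)
    (hblock : ∀ n < M, ∀ i, idx n ≤ i → i < idx (n + 1) →
      r i = min
        (g (((∑ j ∈ range (idx (n + 1)), E j) -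
              ∑ j ∈ range (idx n), ginv (r j)) /
            ((idx (n + 1) : ℝ) - (idx n : ℝ))))
        (φinv (((∑ j ∈ range (idx (n + 1)), (Ebar j + α * H j)) -
              ∑ j ∈ range (idx n), φ (r j)) /
            ((idx (n + 1) : ℝ) - (idx n : ℝ)))))
    (hargmin : ∀ n < M, ∀ i, idx n < i → i ≤ N →
      min
        (g (((∑ j ∈ range (idx (n + 1)), E j) -
              ∑ j ∈ range (idx n), ginv (r j)) /
            ((idx (n + 1) : ℝ) - (idx n : ℝ))))
        (φinv (((∑ j ∈ range (idx (n + 1)), (Ebar j + α * H j)) -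
              ∑ j ∈ range (idx n), φ (r j)) /
            ((idx (n + 1) : ℝ) - (idx n : ℝ)))) ≤
      min
        (g (((∑ j ∈ range i, E j) -
              ∑ j ∈ range (idx n), ginv (r j)) /
            ((i : ℝ) - (idx n : ℝ))))
        (φinv (((∑ j ∈ range i, (Ebar j + α * H j)) -
              ∑ j ∈ range (idx n), φ (r j)) /
            ((i : ℝ) - (idx n : ℝ))))) :
    (∀ j < N, ∑ i ∈ range (j + 1), ginv (r i) ≤ ∑ i ∈ range (j + 1), E i) ∧
    (∀ j < N, ∑ i ∈ range (j + 1), φ (r i) ≤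
      ∑ i ∈ range (j + 1), (Ebar i + α * H i)) := by
  have hginv_le : ∀ ρ y, 0 ≤ ρ → 0 ≤ y → ρ ≤ g y → ginv ρ ≤ y := fun ρ y _ hy hρ => by
    rw [hginv]
    exact exp_two_mul_sub_one_le (by linarith) (hg y ▸ hρ)
  have hφ_le : ∀ ρ y, 0 ≤ ρ → 0 ≤ y → ρ ≤ φinv y → φ ρ ≤ y := fun ρ y hρ0 hy hρ =>
    hφinv' y hy ▸ hφmono.monotoneOn hρ0 (le_trans hρ0 hρ) hρ
  have he_nonneg : ∀ i, 0 ≤ Ebar i + α * H i := fun i => by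
    have := hEbar i; have := hH i; positivity
  suffices h : ∀ i ≤ N, (∑ k ∈ range i, ginv (r k) ≤ ∑ k ∈ range i, E k) ∧
      ∑ k ∈ range i, φ (r k) ≤ ∑ k ∈ range i, (Ebar k + α * H k) from
    ⟨fun j hj => (h (j + 1) hj).1, fun j hj => (h (j + 1) hj).2⟩
  refine forall_le_of_block_step hidx0 hidxM (by simp) fun n hn j hnj hjn hjN hprefix => ?_
  have hconst : ∀ k ∈ Ico (idx n) (j + 1), r k = r j := fun k hk => by
    rw [mem_Ico] at hk
    rw [hblock n hn k hk.1 (by omega), hblock n hn j hnj hjn]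
  have hle := hblock n hn j hnj hjn ▸ hargmin n hn (j + 1) (by omega) hjN
  exact ⟨sum_range_comp_le_of_block ginv g E r hE hginv_le (by omega) (hr j) hconst hprefix.1
      (le_trans hle (min_le_left _ _)),
    sum_range_comp_le_of_block φ φinv _ r he_nonneg hφ_le (by omega) (hr j) hconst hprefix.2
      (le_trans hle (min_le_right _ _))⟩

/-- Feasibility half of Theorem 1: the block-constant rates defined by the
recursive min/argmin policy satisfy both cumulative energy causality
constraints (transmitter, and receiver-plus-helper). -/
theorem stmt_14 (N : ℕ) (hN : 0 < N)
    (E Ebar H : ℕ → ℝ)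
    (hE : ∀ i, 0 ≤ E i) (hEbar : ∀ i, 0 ≤ Ebar i) (hH : ∀ i, 0 ≤ H i)
    (α : ℝ) (hα0 : 0 ≤ α) (hα1 : α ≤ 1)
    (g ginv : ℝ → ℝ)
    (hg : ∀ p, g p = Real.log (1 + p) / 2)
    (hginv : ∀ x, ginv x = Real.exp (2 * x) - 1)
    (φ φinv : ℝ → ℝ)
    (hφconv : StrictConvexOn ℝ (Set.Ici 0) φ)
    (hφmono : StrictMonoOn φ (Set.Ici 0))
    (hφ0 : φ 0 = 0)
    (hφmap : ∀ x, 0 ≤ x → 0 ≤ φ x)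
    (hφinv : ∀ x, 0 ≤ x → φinv (φ x) = x)
    (hφinv' : ∀ y, 0 ≤ y → φ (φinv y) = y)
    (r : ℕ → ℝ) (hr : ∀ i, 0 ≤ r i)
    (M : ℕ) (idx : ℕ → ℕ)
    (hidx0 : idx 0 = 0) (hidxM : idx M = N)
    (hidx_mono : ∀ n < M, idx n < idx (n + 1))
    (hblock : ∀ n < M, ∀ i, idx n ≤ i → i < idx (n + 1) →
      r i = min
        (g (((∑ j ∈ range (idx (n + 1)), E j) -
              ∑ j ∈ range (idx n), ginv (r j)) /
            ((idx (n + 1) : ℝ) - (idx n : ℝ))))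
        (φinv (((∑ j ∈ range (idx (n + 1)), (Ebar j + α * H j)) -
              ∑ j ∈ range (idx n), φ (r j)) /
            ((idx (n + 1) : ℝ) - (idx n : ℝ)))))
    (hargmin : ∀ n < M, ∀ i, idx n < i → i ≤ N →
      min
        (g (((∑ j ∈ range (idx (n + 1)), E j) -
              ∑ j ∈ range (idx n), ginv (r j)) /
            ((idx (n + 1) : ℝ) - (idx n : ℝ))))
        (φinv (((∑ j ∈ range (idx (n + 1)), (Ebar j + α * H j)) -
              ∑ j ∈ range (idx n), φ (r j)) /
            ((idx (n + 1) : ℝ) - (idx n : ℝ)))) ≤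
      min
        (g (((∑ j ∈ range i, E j) -
              ∑ j ∈ range (idx n), ginv (r j)) /
            ((i : ℝ) - (idx n : ℝ))))
        (φinv (((∑ j ∈ range i, (Ebar j + α * H j)) -
              ∑ j ∈ range (idx n), φ (r j)) /
            ((i : ℝ) - (idx n : ℝ))))) :
    (∀ j < N, ∑ i ∈ range (j + 1), ginv (r i) ≤ ∑ i ∈ range (j + 1), E i) ∧
    (∀ j < N, ∑ i ∈ range (j + 1), φ (r i) ≤
      ∑ i ∈ range (j + 1), (Ebar i + α * H i)) :=
  stmt_14_general N E Ebar H hE hEbar hH α hα0 g ginv hg hginv φ φinv hφmono hφinv' r hr M idx hidx0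
    hidxM hblock hargmin
end

section
/- Equivalence of removing a slot and augmenting the next slot's energy: for f strictly concave increasing, the problem of maximizing ∑_{i≠k} f(q_i) subject to ∑_{i≤j, i≠k} q_i ≤ ∑_{i≤j, i≠k} Ē_i + α ∑_{i≤j, i≠k} δ_i, ∑_{i≤j} δ_i ≤ ∑_{i≤j} H_i for all j, and δ_k = 0, has the same optimal value as maximizing ∑_{i≠k} f(q_i) subject to ∑_{i≤j, i≠k} q_i ≤ ∑_{i≤j, i≠k} (Ē_i + α H''_i) for all j, where H''_i = H_i for i ∉ {k, k+1} and H''_{k+1} = H_{k+1} + H_k (assuming k < N). -/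
/-!
The two feasible sets of allocations `q` coincide, so the optimal values agree whatever `f` is.
Since `δ k = 0`, the prefix budgets of `δ` over `Iic j` and over `(Iic j).erase k` are equal,
and the shifted budget `H''` has the same prefix sums over `(Iic j).erase k` as `H` has over
`Iic j`, except at `j = k`, where it gives the prefix up to `k - 1`. Hence `δ` satisfies the
helper constraints iff `δ ≤ H''` in prefix sums off `k`, and `H''` itself (set to `0` at `k`)
is the largest feasible transfer.
-/

open Finset

section PrefixSums

variable {ι : Type*} [LinearOrder ι] [LocallyFiniteOrderBot ι]

theorem sum_Iio_le_sum_Iio_of_forall_sum_Iic_le [PredOrder ι] {a b : ι → ℝ}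
    (h : ∀ j, ∑ i ∈ Iic j, a i ≤ ∑ i ∈ Iic j, b i) (j : ι) :
    ∑ i ∈ Iio j, a i ≤ ∑ i ∈ Iio j, b i := by
  by_cases hj : IsMin j
  · simp [Iio_eq_empty.2 hj]
  · rw [← Iic_pred_eq_Iio_of_not_isMin hj]
    exact h _

variable [DecidableEq ι] {k k' : ι} {H H' : ι → ℝ}

theorem sum_erase_Iic_eq_sum_Iic_of_ne (hk : k ⋖ k')
    (hH'_of_ne : ∀ i, i ≠ k → i ≠ k' → H' i = H i) (hH'_succ : H' k' = H k' + H k)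
    {j : ι} (hj : j ≠ k) :
    ∑ i ∈ (Iic j).erase k, H' i = ∑ i ∈ Iic j, H i := by
  have hH' : ∀ i ∈ (Iic j).erase k, H' i = H i + if i = k' then H k else 0 := by
    intro i hi
    by_cases hik' : i = k'
    · simp [hik', hH'_succ]
    · simp [hik', hH'_of_ne i (ne_of_mem_erase hi) hik']
  rw [sum_congr rfl hH', sum_add_distrib, sum_ite_eq']
  rcases hj.lt_or_gt with hjk | hkj
  · have hk'j : k' ∉ (Iic j).erase k := fun h ↦
      (mem_Iic.1 (mem_of_mem_erase h)).not_gt (hjk.trans hk.lt)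
    rw [if_neg hk'j, add_zero, erase_eq_of_notMem (by simpa using hjk.not_ge)]
  · have hk'j : k' ∈ (Iic j).erase k := mem_erase.2 ⟨hk.lt.ne', mem_Iic.2 (hk.ge_of_gt hkj)⟩
    rw [if_pos hk'j, add_comm, add_sum_erase _ _ (mem_Iic.2 hkj.le)]

theorem sum_erase_Iic_self_eq_sum_Iio (hk : k ⋖ k')
    (hH'_of_ne : ∀ i, i ≠ k → i ≠ k' → H' i = H i) :
    ∑ i ∈ (Iic k).erase k, H' i = ∑ i ∈ Iio k, H i := by
  rw [Iic_erase]
  exact sum_congr rfl fun i hi ↦ hH'_of_ne i (mem_Iio.1 hi).ne ((mem_Iio.1 hi).trans hk.lt).ne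

theorem forall_sum_Iic_le_iff [PredOrder ι] (hk : k ⋖ k')
    (hH'_of_ne : ∀ i, i ≠ k → i ≠ k' → H' i = H i) (hH'_succ : H' k' = H k' + H k)
    (hHk : 0 ≤ H k) {δ : ι → ℝ} (hδk : δ k = 0) :
    (∀ j, ∑ i ∈ Iic j, δ i ≤ ∑ i ∈ Iic j, H i) ↔
      ∀ j, ∑ i ∈ (Iic j).erase k, δ i ≤ ∑ i ∈ (Iic j).erase k, H' i := by
  have hδ_erase : ∀ j, ∑ i ∈ (Iic j).erase k, δ i = ∑ i ∈ Iic j, δ i := fun j ↦ sum_erase _ hδk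
  constructor
  · intro h j
    rcases eq_or_ne j k with rfl | hj
    · rw [sum_erase_Iic_self_eq_sum_Iio hk hH'_of_ne, Iic_erase]
      exact sum_Iio_le_sum_Iio_of_forall_sum_Iic_le h j
    · rw [sum_erase_Iic_eq_sum_Iic_of_ne hk hH'_of_ne hH'_succ hj, hδ_erase]
      exact h j
  · intro h j
    rcases eq_or_ne j k with rfl | hj
    · calc ∑ i ∈ Iic j, δ i = ∑ i ∈ (Iic j).erase j, δ i := (hδ_erase j).symm
        _ ≤ ∑ i ∈ Iio j, H i := sum_erase_Iic_self_eq_sum_Iio hk hH'_of_ne ▸ h j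
        _ ≤ ∑ i ∈ Iic j, H i := by rw [← Iio_insert, sum_insert (by simp)]; linarith
    · rw [← hδ_erase, ← sum_erase_Iic_eq_sum_Iic_of_ne hk hH'_of_ne hH'_succ hj]
      exact h j


theorem exists_transfer_iff [PredOrder ι] (hk : k ⋖ k')
    (hH'_of_ne : ∀ i, i ≠ k → i ≠ k' → H' i = H i) (hH'_succ : H' k' = H k' + H k)
    (hH : ∀ i, 0 ≤ H i) {α : ℝ} (hα : 0 ≤ α) (E q : ι → ℝ) :
    (∃ δ : ι → ℝ, (∀ i, 0 ≤ δ i) ∧ δ k = 0 ∧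
        (∀ j, ∑ i ∈ (Iic j).erase k, q i ≤
          (∑ i ∈ (Iic j).erase k, E i) + α * ∑ i ∈ (Iic j).erase k, δ i) ∧
        ∀ j, ∑ i ∈ Iic j, δ i ≤ ∑ i ∈ Iic j, H i) ↔
      ∀ j, ∑ i ∈ (Iic j).erase k, q i ≤ ∑ i ∈ (Iic j).erase k, (E i + α * H' i) := by
  have hsplit : ∀ j, ∑ i ∈ (Iic j).erase k, (E i + α * H' i) =
      (∑ i ∈ (Iic j).erase k, E i) + α * ∑ i ∈ (Iic j).erase k, H' i := fun j ↦ by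
    rw [sum_add_distrib, mul_sum]
  constructor
  · rintro ⟨δ, -, hδk, hq, hδH⟩ j
    have hδH' := (forall_sum_Iic_le_iff hk hH'_of_ne hH'_succ (hH k) hδk).1 hδH j
    rw [hsplit]
    exact (hq j).trans (by gcongr)
  · intro hq
    set δ := Function.update H' k 0
    have hδ_erase : ∀ j, ∑ i ∈ (Iic j).erase k, δ i = ∑ i ∈ (Iic j).erase k, H' i :=
      fun j ↦ sum_congr rfl fun i hi ↦ Function.update_of_ne (ne_of_mem_erase hi) _ _
    have hδk : δ k = 0 := Function.update_self ..
    have hH'_nonneg : ∀ i, i ≠ k → 0 ≤ H' i := fun i hik ↦ by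
      by_cases hik' : i = k'
      · rw [hik', hH'_succ]
        exact add_nonneg (hH k') (hH k)
      · rw [hH'_of_ne i hik hik']
        exact hH i
    refine ⟨δ, fun i ↦ ?_, hδk, fun j ↦ hδ_erase j ▸ hsplit j ▸ hq j,
      (forall_sum_Iic_le_iff hk hH'_of_ne hH'_succ (hH k) hδk).2 fun j ↦ (hδ_erase j).le⟩
    by_cases hik : i = k
    · rw [hik, hδk]
    · rw [show δ i = H' i from Function.update_of_ne hik _ _]
      exact hH'_nonneg i hik

end PrefixSums

theorem stmt_17_general (N : ℕ)
    (Ebar H H'' : Fin N → ℝ)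
    (hH : ∀ i, 0 ≤ H i)
    (α : ℝ) (hα0 : 0 ≤ α)
    (f : ℝ → ℝ)
    (k k1 : Fin N) (hkk1 : (k : ℕ) + 1 = (k1 : ℕ))
    (hH''1 : ∀ i, i ≠ k → i ≠ k1 → H'' i = H i)
    (hH''2 : H'' k1 = H k1 + H k) :
    sSup {v : ℝ | ∃ q δ : Fin N → ℝ,
        (∀ i, i ≠ k → 0 ≤ q i) ∧ (∀ i, 0 ≤ δ i) ∧ δ k = 0 ∧
        (∀ j : Fin N, ∑ i ∈ (Iic j).erase k, q i ≤
          (∑ i ∈ (Iic j).erase k, Ebar i) +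
            α * ∑ i ∈ (Iic j).erase k, δ i) ∧
        (∀ j : Fin N, ∑ i ∈ Iic j, δ i ≤ ∑ i ∈ Iic j, H i) ∧
        v = ∑ i ∈ univ.erase k, f (q i)} =
    sSup {v : ℝ | ∃ q : Fin N → ℝ,
        (∀ i, i ≠ k → 0 ≤ q i) ∧
        (∀ j : Fin N, ∑ i ∈ (Iic j).erase k, q i ≤
          ∑ i ∈ (Iic j).erase k, (Ebar i + α * H'' i)) ∧
        v = ∑ i ∈ univ.erase k, f (q i)} := by
  have hk : k ⋖ k1 := Fin.covBy_iff.2 (Nat.covBy_iff_add_one_eq.2 hkk1)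
  have htransfer := exists_transfer_iff hk hH''1 hH''2 hH hα0 Ebar
  congr 1
  ext v
  constructor
  · rintro ⟨q, δ, hq, hδ, hδk, hqδ, hδH, rfl⟩
    exact ⟨q, hq, (htransfer q).1 ⟨δ, hδ, hδk, hqδ, hδH⟩, rfl⟩
  · rintro ⟨q, hq, hqH, rfl⟩
    obtain ⟨δ, hδ, hδk, hqδ, hδH⟩ := (htransfer q).2 hqH
    exact ⟨q, δ, hq, hδ, hδk, hqδ, hδH, rfl⟩

/-- Reformulation step in Lemma 6: forbidding helper transfer at slot `k`
(`δ k = 0`) gives the same optimal value as moving the helper's slot-`k`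
energy to slot `k+1` and transferring immediately. -/
theorem stmt_17 (N : ℕ) (hN : 0 < N)
    (Ebar H H'' : Fin N → ℝ)
    (hEbar : ∀ i, 0 ≤ Ebar i) (hH : ∀ i, 0 ≤ H i)
    (α : ℝ) (hα0 : 0 ≤ α) (hα1 : α ≤ 1)
    (f : ℝ → ℝ)
    (hconc : StrictConcaveOn ℝ (Set.Ici 0) f)
    (hmono : StrictMonoOn f (Set.Ici 0))
    (k k1 : Fin N) (hkk1 : (k : ℕ) + 1 = (k1 : ℕ))
    (hH''1 : ∀ i, i ≠ k → i ≠ k1 → H'' i = H i)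
    (hH''2 : H'' k1 = H k1 + H k) :
    sSup {v : ℝ | ∃ q δ : Fin N → ℝ,
        (∀ i, i ≠ k → 0 ≤ q i) ∧ (∀ i, 0 ≤ δ i) ∧ δ k = 0 ∧
        (∀ j : Fin N, ∑ i ∈ (Iic j).erase k, q i ≤
          (∑ i ∈ (Iic j).erase k, Ebar i) +
            α * ∑ i ∈ (Iic j).erase k, δ i) ∧
        (∀ j : Fin N, ∑ i ∈ Iic j, δ i ≤ ∑ i ∈ Iic j, H i) ∧
        v = ∑ i ∈ univ.erase k, f (q i)} =
    sSup {v : ℝ | ∃ q : Fin N → ℝ,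
        (∀ i, i ≠ k → 0 ≤ q i) ∧
        (∀ j : Fin N, ∑ i ∈ (Iic j).erase k, q i ≤
          ∑ i ∈ (Iic j).erase k, (Ebar i + α * H'' i)) ∧
        v = ∑ i ∈ univ.erase k, f (q i)} :=
  stmt_17_general N Ebar H H'' hH α hα0 f k k1 hkk1 hH''1 hH''2
end
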